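/- arXiv:0912.2619 — 5 statements merged into one kernel-verified Lean document; each statement's English description precedes it below -/
import Mathlib

section
/- Assume W is finite. Let M be the submonoid of self-maps of W (under composition) generated by {f_i : i ∈ B}. Then the evaluation map m ↦ m(e), where e is the identity element of W, is a bijection from M onto W; in particular M has exactly |W| elements. -/
open scoped Classical

noncomputable section

namespace HGA

variable {B : Type*} {W : Type*} [Group W] {M : CoxeterMatrix B}

/-- `f_i : W → W` sends `w` to `w * s_i` if `i` is not a right descent of `w`,
and to `w` otherwise; regarded as an element of the monoid `Function.End W`
of self-maps of `W` under composition. -/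
def coxF (cs : CoxeterSystem M W) (i : B) : Function.End W :=
  fun w => if cs.IsRightDescent w i then w else w * cs.simple i

/-- The submonoid of self-maps of `W` (under composition) generated by the `f_i`. -/
def zeroHeckeMonoid (cs : CoxeterSystem M W) : Submonoid (Function.End W) :=
  Submonoid.closure (Set.range (coxF cs))

/-! Two elements of the monoid that agree at `1` agree everywhere because they commute with the
left operators `g_i : w ↦ s_i w` (`w` if `i` is a left descent of `w`), and every `u` is
`g_{i_1} ⋯ g_{i_k} 1` for a reduced word of `u`; surjectivity is the same induction on length
with the `f_i`. The commutation `f_j g_i = g_i f_j` reduces, in the one case not settled by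
lengths, to: if `s_i w > w` and `s_i w s_j < w s_j` then `s_i w = w s_j`. This is the exchange
property, obtained from Tits' sign representation of `W` on `W × ℤˣ`, in which `s_i` acts by
`(t, ε) ↦ (s_i t s_i, ±ε)` with the sign flipping exactly at `t = s_i`: along any word `ω` the
sign at `t` records the parity of the occurrences of `t` in the right inversion sequence of `ω`,
and a right descent `s_i` of `π ω` has odd parity. -/

open CoxeterSystem Finset

lemma skewProduct_pow_apply {X G : Type*} [CommMonoid G] {F : Function.End (X × G)}
    (g : X → X) (χ : X → G) (hF : ∀ p, F p = (g p.1, χ p.1 * p.2)) (k : ℕ) (p : X × G) :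
    (F ^ k) p = (g^[k] p.1, (∏ n ∈ range k, χ (g^[n] p.1)) * p.2) := by
  induction k with
  | zero => simp only [pow_zero, Function.iterate_zero, id, prod_range_zero, one_mul]; rfl
  | succ k ih =>
    rw [pow_succ']
    show F ((F ^ k) p) = _
    rw [ih, hF, Function.iterate_succ_apply', prod_range_succ]
    exact Prod.ext rfl (by dsimp only; ac_rfl)

lemma prod_range_two_mul {G : Type*} [CommMonoid G] (f : ℕ → G) (k : ℕ) :
    ∏ n ∈ range (2 * k), f n = ∏ n ∈ range k, (f (2 * n) * f (2 * n + 1)) := by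
  induction k with
  | zero => rfl
  | succ k ih =>
    rw [mul_add, mul_one, prod_range_succ, prod_range_succ, prod_range_succ, ih, mul_assoc]

lemma iterate_conj_apply {G : Type*} [Group G] (x u : G) (n : ℕ) :
    (fun u => x * u * x⁻¹)^[n] u = x ^ n * u * (x ^ n)⁻¹ := by
  induction n with
  | zero => simp
  | succ n ih => rw [Function.iterate_succ_apply', ih]; group

def eqSign {X : Type*} (t u : X) : ℤˣ := if t = u then -1 else 1

lemma prod_map_eqSign_eq_one {X : Type*} {L : List X} {u : X} (hu : u ∉ L) :
    (L.map (eqSign · u)).prod = 1 :=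
  List.prod_eq_one fun _ hx => by
    obtain ⟨t, ht, rfl⟩ := List.mem_map.mp hx
    exact if_neg (by rintro rfl; exact hu ht)

lemma eqSign_conj (t u x : W) : eqSign t (x * u * x⁻¹) = eqSign (x⁻¹ * t * x) u := by
  unfold eqSign
  congr 1
  apply propext
  constructor <;> rintro rfl <;> group

variable (cs : CoxeterSystem M W)

def signRepGen (i : B) : Function.End (W × ℤˣ) :=
  fun p => (cs.simple i * p.1 * cs.simple i, eqSign (cs.simple i) p.1 * p.2)

lemma signRepGen_mul_signRepGen_apply (i j : B) (p : W × ℤˣ) :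
    (signRepGen cs i * signRepGen cs j) p =
      (cs.simple i * cs.simple j * p.1 * (cs.simple i * cs.simple j)⁻¹,
        (eqSign (cs.simple j) p.1 * eqSign (cs.simple j * cs.simple i * cs.simple j) p.1)
          * p.2) := by
  have h := eqSign_conj (cs.simple i) p.1 (cs.simple j)
  rw [cs.inv_simple] at h
  refine Prod.ext ?_ ?_
  · show cs.simple i * (cs.simple j * p.1 * cs.simple j) * cs.simple i = _
    simp only [mul_inv_rev, cs.inv_simple, mul_assoc]
  · show eqSign (cs.simple i) (cs.simple j * p.1 * cs.simple j) * (eqSign _ _ * p.2) = _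
    rw [h, mul_left_comm]
    exact (mul_assoc _ _ _).symm

lemma isLiftable_signRepGen : M.IsLiftable (signRepGen cs) := by
  intro i j
  funext p
  set c := cs.simple i * cs.simple j
  have hsemi : ∀ n, cs.simple j * c ^ n = c⁻¹ ^ n * cs.simple j := fun n =>
    (SemiconjBy.pow_right (by simp only [SemiconjBy, c, mul_inv_rev, cs.inv_simple, mul_assoc])
      n).eq
  -- The reflections met along `(s_i s_j)^M` are `c⁻¹^m s_j` for `m < 2M`, with period `M`.
  set f : ℕ → ℤˣ := fun m => eqSign (c⁻¹ ^ m * cs.simple j) p.1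
  have hterm : ∀ n, eqSign (cs.simple j) (c ^ n * p.1 * (c ^ n)⁻¹)
      * eqSign (cs.simple j * cs.simple i * cs.simple j) (c ^ n * p.1 * (c ^ n)⁻¹)
        = f (2 * n) * f (2 * n + 1) := by
    intro n
    have hsji : cs.simple j * cs.simple i * cs.simple j = c⁻¹ * cs.simple j := by
      simp only [c, mul_inv_rev, cs.inv_simple]
    rw [eqSign_conj, eqSign_conj, hsji, ← inv_pow]
    simp only [f, mul_assoc, hsemi]
    simp only [← mul_assoc, ← pow_add, ← pow_succ]
    congr 4 <;> ring
  have hpow : c ^ M i j = 1 := cs.simple_mul_simple_pow i j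
  have hpow_inv : c⁻¹ ^ M i j = 1 := by rw [inv_pow, hpow, inv_one]
  have hperiodic : ∀ m, f (M i j + m) = f m := fun m => by
    simp only [f, pow_add, hpow_inv, one_mul]
  rw [skewProduct_pow_apply (fun u => c * u * c⁻¹)
    (fun u => eqSign (cs.simple j) u * eqSign (cs.simple j * cs.simple i * cs.simple j) u)
    (signRepGen_mul_signRepGen_apply cs i j)]
  simp only [iterate_conj_apply, hterm]
  rw [← prod_range_two_mul f, two_mul, prod_range_add]
  simp only [hperiodic, Int.units_mul_self, one_mul, hpow, inv_one, mul_one]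
  rfl

def signRep : W →* Function.End (W × ℤˣ) :=
  cs.lift ⟨signRepGen cs, isLiftable_signRepGen cs⟩

lemma signRep_simple (i : B) : signRep cs (cs.simple i) = signRepGen cs i :=
  cs.lift_apply_simple (isLiftable_signRepGen cs) i

lemma signRep_mul_apply (u v : W) (p : W × ℤˣ) :
    signRep cs (u * v) p = signRep cs u (signRep cs v p) := by
  rw [map_mul]; rfl

lemma signRep_wordProd (ω : List B) (p : W × ℤˣ) :
    signRep cs (cs.wordProd ω) p = (cs.wordProd ω * p.1 * (cs.wordProd ω)⁻¹,
      ((cs.rightInvSeq ω).map (eqSign · p.1)).prod * p.2) := by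
  induction ω with
  | nil =>
    simp only [wordProd_nil, map_one, one_mul, inv_one, mul_one, rightInvSeq_nil, List.map_nil,
      List.prod_nil]
    rfl
  | cons i ω ih =>
    rw [cs.wordProd_cons, signRep_mul_apply, ih, signRep_simple]
    refine Prod.ext ?_ ?_
    · show cs.simple i * _ * cs.simple i = _
      simp only [mul_inv_rev, cs.inv_simple, mul_assoc]
    · show eqSign (cs.simple i) (cs.wordProd ω * p.1 * (cs.wordProd ω)⁻¹) * _ = _
      rw [eqSign_conj, rightInvSeq, List.map_cons, List.prod_cons]
      exact (mul_assoc _ _ _).symm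

lemma signRep_apply_simple_of_isRightDescent {w : W} {i : B} (h : cs.IsRightDescent w i) :
    (signRep cs w (cs.simple i, 1)).2 = -1 := by
  obtain ⟨ω, hω, hw⟩ := cs.exists_isReduced (w * cs.simple i)
  have hnot : cs.simple i ∉ cs.rightInvSeq ω := fun hmem => by
    have := cs.isRightInversion_of_mem_rightInvSeq hω hmem
    rw [← hw, cs.isRightInversion_simple_iff_isRightDescent] at this
    exact cs.isRightDescent_iff_not_isRightDescent_mul.mp h this
  have hgen : signRepGen cs i (cs.simple i, 1) = (cs.simple i, -1) := by
    simp [signRepGen, eqSign, cs.simple_mul_simple_self]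
  rw [← cs.simple_mul_simple_cancel_right (w := w) i, hw, signRep_mul_apply, signRep_simple, hgen,
    signRep_wordProd]
  exact mul_eq_right.mpr (prod_map_eqSign_eq_one hnot)

lemma mem_rightInvSeq_of_isRightDescent {ω : List B} {i : B}
    (h : cs.IsRightDescent (cs.wordProd ω) i) : cs.simple i ∈ cs.rightInvSeq ω := by
  by_contra hnot
  have hsign := signRep_apply_simple_of_isRightDescent cs h
  rw [signRep_wordProd, prod_map_eqSign_eq_one hnot, one_mul] at hsign
  exact (by decide : (1 : ℤˣ) ≠ -1) hsign

lemma simple_mul_eq_mul_simple {w : W} {i j : B} (hi : ¬cs.IsLeftDescent w i)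
    (hd : cs.IsLeftDescent (w * cs.simple j) i) : cs.simple i * w = w * cs.simple j := by
  obtain ⟨ω, hω, hw⟩ := cs.exists_isReduced w⁻¹
  have hprod : cs.wordProd (j :: ω) = (w * cs.simple j)⁻¹ := by
    rw [cs.wordProd_cons, ← hw, mul_inv_rev, cs.inv_simple]
  have hmem := mem_rightInvSeq_of_isRightDescent cs (ω := j :: ω)
    (by rwa [hprod, cs.isRightDescent_inv_iff])
  rw [rightInvSeq, List.mem_cons, ← hw, inv_inv] at hmem
  rcases hmem with heq | hmem
  · rw [heq, inv_mul_cancel_right]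
  · have := cs.isRightInversion_of_mem_rightInvSeq hω hmem
    rw [← hw, cs.isRightInversion_simple_iff_isRightDescent, cs.isRightDescent_inv_iff] at this
    exact absurd this hi

def coxG (i : B) : Function.End W :=
  fun w => if cs.IsLeftDescent w i then w else cs.simple i * w

lemma isLeftDescent_mul_simple {w : W} {i j : B} (hi : cs.IsLeftDescent w i)
    (hj : ¬cs.IsRightDescent w j) : cs.IsLeftDescent (w * cs.simple j) i := by
  have h1 := cs.isLeftDescent_iff.mp hi
  have h2 := cs.not_isRightDescent_iff.mp hj
  have h3 := cs.length_mul_le (cs.simple i * w) (cs.simple j)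
  rw [cs.length_simple, mul_assoc] at h3
  unfold IsLeftDescent
  omega

lemma isRightDescent_simple_mul {w : W} {i j : B} (hj : cs.IsRightDescent w j)
    (hi : ¬cs.IsLeftDescent w i) : cs.IsRightDescent (cs.simple i * w) j := by
  have h1 := cs.isRightDescent_iff.mp hj
  have h2 := cs.not_isLeftDescent_iff.mp hi
  have h3 := cs.length_mul_le (cs.simple i) (w * cs.simple j)
  rw [cs.length_simple, ← mul_assoc] at h3
  unfold IsRightDescent
  omega

lemma commute_coxF_coxG (i j : B) : Commute (coxF cs j) (coxG cs i) := by
  funext w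
  show coxF cs j (coxG cs i w) = coxG cs i (coxF cs j w)
  by_cases hL : cs.IsLeftDescent w i <;> by_cases hR : cs.IsRightDescent w j
  · simp only [coxF, coxG, hL, hR, if_true]
  · simp only [coxF, coxG, hL, hR, isLeftDescent_mul_simple cs hL hR, if_true, if_false]
  · simp only [coxF, coxG, hL, hR, isRightDescent_simple_mul cs hR hL, if_true, if_false]
  · by_cases hd : cs.IsLeftDescent (w * cs.simple j) i
    · have hd' : cs.IsRightDescent (w * cs.simple j) j := by
        rwa [cs.isRightDescent_iff_not_isRightDescent_mul, cs.simple_mul_simple_cancel_right]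
      simp only [coxF, coxG, hL, hR, hd, simple_mul_eq_mul_simple cs hL hd, hd', if_true,
        if_false]
    · have hd' : ¬cs.IsRightDescent (cs.simple i * w) j := by
        have h1 := cs.not_isLeftDescent_iff.mp hL
        have h2 := cs.not_isRightDescent_iff.mp hR
        have h3 := cs.not_isLeftDescent_iff.mp hd
        unfold IsRightDescent
        rw [mul_assoc]
        omega
      simp only [coxF, coxG, hL, hR, hd, hd', if_false, mul_assoc]

lemma zeroHeckeMonoid_le_centralizer :
    zeroHeckeMonoid cs ≤ Submonoid.centralizer (Set.range (coxG cs)) :=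
  Submonoid.closure_le.mpr <| by
    rintro _ ⟨j, rfl⟩ _ ⟨i, rfl⟩
    exact (commute_coxF_coxG cs i j).eq.symm

lemma coxF_mul_simple_of_isRightDescent {w : W} {i : B} (h : cs.IsRightDescent w i) :
    coxF cs i (w * cs.simple i) = w := by
  rw [coxF, if_neg (cs.isRightDescent_iff_not_isRightDescent_mul.mp h),
    cs.simple_mul_simple_cancel_right]

lemma coxG_simple_mul_of_isLeftDescent {w : W} {i : B} (h : cs.IsLeftDescent w i) :
    coxG cs i (cs.simple i * w) = w := by
  rw [coxG, if_neg (cs.isLeftDescent_iff_not_isLeftDescent_mul.mp h),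
    cs.simple_mul_simple_cancel_left]

lemma exists_mem_zeroHeckeMonoid_apply_one_eq (w : W) :
    ∃ m ∈ zeroHeckeMonoid cs, m 1 = w := by
  induction hn : cs.length w generalizing w with
  | zero => exact ⟨1, one_mem _, (cs.length_eq_zero_iff.mp hn).symm⟩
  | succ n ih =>
    obtain ⟨i, hi⟩ := cs.exists_rightDescent_of_ne_one (w := w) (by rintro rfl; simp at hn)
    obtain ⟨m, hm, hmw⟩ := ih (w * cs.simple i) (by have := cs.isRightDescent_iff.mp hi; omega)
    refine ⟨coxF cs i * m, mul_mem (Submonoid.subset_closure ⟨i, rfl⟩) hm, ?_⟩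
    show coxF cs i (m 1) = w
    rw [hmw, coxF_mul_simple_of_isRightDescent cs hi]

lemma eq_of_mem_zeroHeckeMonoid_of_apply_one_eq {m m' : Function.End W}
    (hm : m ∈ zeroHeckeMonoid cs) (hm' : m' ∈ zeroHeckeMonoid cs) (h : m 1 = m' 1) :
    m = m' := by
  have hG : ∀ m ∈ zeroHeckeMonoid cs, ∀ i u, m (coxG cs i u) = coxG cs i (m u) :=
    fun m hm i u => congrFun (zeroHeckeMonoid_le_centralizer cs hm _ ⟨i, rfl⟩).symm u
  funext u
  induction hn : cs.length u generalizing u with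
  | zero => rwa [cs.length_eq_zero_iff.mp hn]
  | succ n ih =>
    obtain ⟨i, hi⟩ := cs.exists_leftDescent_of_ne_one (w := u) (by rintro rfl; simp at hn)
    rw [← coxG_simple_mul_of_isLeftDescent cs hi, hG m hm, hG m' hm',
      ih _ (by have := cs.isLeftDescent_iff.mp hi; omega)]

theorem zeroHeckeMonoid_eval_bijective_general (cs : CoxeterSystem M W) :
    Function.Bijective
      (fun m : zeroHeckeMonoid cs => (m : Function.End W) (1 : W)) ∧
    Nat.card (zeroHeckeMonoid cs) = Nat.card W := by
  have hbij : Function.Bijective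
      (fun m : zeroHeckeMonoid cs => (m : Function.End W) (1 : W)) := by
    refine ⟨fun m m' h => Subtype.ext ?_, fun w => ?_⟩
    · exact eq_of_mem_zeroHeckeMonoid_of_apply_one_eq cs m.2 m'.2 h
    · obtain ⟨m, hm, hmw⟩ := exists_mem_zeroHeckeMonoid_apply_one_eq cs w
      exact ⟨⟨m, hm⟩, hmw⟩
  exact ⟨hbij, Nat.card_eq_of_bijective _ hbij⟩

/-- for `W` finite, evaluation at the identity of `W` is a bijection
from the monoid generated by the `f_i` onto `W`; in particular this monoid has
exactly `|W|` elements. -/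
theorem zeroHeckeMonoid_eval_bijective (cs : CoxeterSystem M W) [Finite W] :
    Function.Bijective
      (fun m : zeroHeckeMonoid cs => (m : Function.End W) (1 : W)) ∧
    Nat.card (zeroHeckeMonoid cs) = Nat.card W :=
  zeroHeckeMonoid_eval_bijective_general cs

end HGA
end
end

section
/- For all scalars q₁, q₂ ∈ ℂ and every i ∈ B, the operator T_i := (q₁ + q₂)·π_i − q₁·σ_i in End_ℂ(ℂ[W]) satisfies the quadratic Hecke relation (T_i − q₁·id) ∘ (T_i − q₂·id) = 0. -/
open scoped Classical

noncomputable section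

namespace HGA

variable {B : Type*} {W : Type*} [Group W] {M : CoxeterMatrix B}

/-- `σ_i` : the linear extension to `ℂ[W]` of right multiplication by the simple
reflection `s_i`. -/
def sigmaOp (cs : CoxeterSystem M W) (i : B) : Module.End ℂ (MonoidAlgebra ℂ W) :=
  (Finsupp.lift (MonoidAlgebra ℂ W) ℂ W fun w =>
    MonoidAlgebra.single (w * cs.simple i) (1 : ℂ))
  ∘ₗ (MonoidAlgebra.coeffLinearEquiv ℂ).toLinearMap

/-- `π_i` : the antisorting (0-Hecke) operator: on a basis element `w` it gives `w * s_i`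
if `i` is not a right descent of `w`, and `w` otherwise. -/
def piOp (cs : CoxeterSystem M W) (i : B) : Module.End ℂ (MonoidAlgebra ℂ W) :=
  (Finsupp.lift (MonoidAlgebra ℂ W) ℂ W fun w =>
    if cs.IsRightDescent w i then MonoidAlgebra.single w (1 : ℂ)
    else MonoidAlgebra.single (w * cs.simple i) (1 : ℂ))
  ∘ₗ (MonoidAlgebra.coeffLinearEquiv ℂ).toLinearMap

/-- `π̄_i` : the sorting operator: on a basis element `w` it gives `w * s_i`
if `i` is a right descent of `w`, and `w` otherwise. -/
def piBarOp (cs : CoxeterSystem M W) (i : B) : Module.End ℂ (MonoidAlgebra ℂ W) :=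
  (Finsupp.lift (MonoidAlgebra ℂ W) ℂ W fun w =>
    if cs.IsRightDescent w i then MonoidAlgebra.single (w * cs.simple i) (1 : ℂ)
    else MonoidAlgebra.single w (1 : ℂ))
  ∘ₗ (MonoidAlgebra.coeffLinearEquiv ℂ).toLinearMap

/-!
From the action on basis elements one reads off three relations in `End ℂ[W]`:
`σ_i² = 1`, `π_i² = π_i`, and `π_i σ_i + σ_i π_i = σ_i + 1` (the last because exactly one
of `w`, `w s_i` has `i` as a right descent). Expanding `(T_i − q₁)(T_i − q₂)` and using
these relations, every coefficient cancels.
-/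

theorem smul_sub_smul_sub_mul_eq_zero {R A : Type*} [CommRing R] [Ring A] [Algebra R A]
    {p s : A} (hp : p * p = p) (hs : s * s = 1) (hps : p * s + s * p = s + 1) (q₁ q₂ : R) :
    ((q₁ + q₂) • p - q₁ • s - q₁ • (1 : A)) * ((q₁ + q₂) • p - q₁ • s - q₂ • (1 : A)) = 0 :=
  calc _ = ((q₁ + q₂) * (q₁ + q₂)) • (p * p - p)
        - ((q₁ + q₂) * q₁) • (p * s + s * p - s - 1) + (q₁ * q₁) • (s * s - 1) := by
        simp only [sub_mul, mul_sub, smul_mul_assoc, mul_smul_comm, mul_one, one_mul]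
        module
    _ = 0 := by simp [hp, hs, hps]

theorem endMonoidAlgebra_ext {R X : Type*} [CommSemiring R]
    {f g : Module.End R (MonoidAlgebra R X)}
    (h : ∀ x : X, f (MonoidAlgebra.single x 1) = g (MonoidAlgebra.single x 1)) : f = g :=
  MonoidAlgebra.lhom_ext' fun x => LinearMap.ext_ring (h x)

section Relations

variable (cs : CoxeterSystem M W) (i : B)

theorem sigmaOp_single (w : W) :
    sigmaOp cs i (MonoidAlgebra.single w 1) = MonoidAlgebra.single (w * cs.simple i) 1 := by
  simp [sigmaOp]

theorem piOp_single (w : W) :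
    piOp cs i (MonoidAlgebra.single w 1) =
      if cs.IsRightDescent w i then MonoidAlgebra.single w 1
      else MonoidAlgebra.single (w * cs.simple i) 1 := by
  simp [piOp]

theorem sigmaOp_mul_self : sigmaOp cs i * sigmaOp cs i = 1 :=
  endMonoidAlgebra_ext fun w => by simp [sigmaOp_single]

theorem piOp_mul_self : piOp cs i * piOp cs i = piOp cs i := by
  refine endMonoidAlgebra_ext fun w => ?_
  by_cases h : cs.IsRightDescent w i
  · simp [piOp_single, h]
  · simp [piOp_single, h, cs.isRightDescent_iff_not_isRightDescent_mul.mpr]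

theorem piOp_mul_sigmaOp_add_sigmaOp_mul_piOp :
    piOp cs i * sigmaOp cs i + sigmaOp cs i * piOp cs i = sigmaOp cs i + 1 := by
  refine endMonoidAlgebra_ext fun w => ?_
  by_cases h : cs.IsRightDescent w i
  · simp [piOp_single, sigmaOp_single, h, cs.isRightDescent_iff_not_isRightDescent_mul.mp]
    abel
  · simp [piOp_single, sigmaOp_single, h, cs.isRightDescent_iff_not_isRightDescent_mul.mpr]

end Relations

/-- for all `q₁ q₂ : ℂ` and `i`, the operator
`T_i = (q₁+q₂) • π_i − q₁ • σ_i` satisfies `(T_i − q₁) * (T_i − q₂) = 0`. -/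
theorem hecke_quadratic_relation (cs : CoxeterSystem M W) (q₁ q₂ : ℂ) (i : B) :
    ((q₁ + q₂) • piOp cs i - q₁ • sigmaOp cs i - q₁ • (1 : Module.End ℂ (MonoidAlgebra ℂ W))) *
      ((q₁ + q₂) • piOp cs i - q₁ • sigmaOp cs i - q₂ • (1 : Module.End ℂ (MonoidAlgebra ℂ W)))
      = 0 :=
  smul_sub_smul_sub_mul_eq_zero (piOp_mul_self cs i) (sigmaOp_mul_self cs i)
    (piOp_mul_sigmaOp_add_sigmaOp_mul_piOp cs i) q₁ q₂

end HGA
end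
end

section
/- Assume W is finite. For each w' ∈ W and each reduced word (i_1, …, i_k) for w' (i.e. w' = s_{i_1}⋯s_{i_k} with k = ℓ(w')), the composed operator π_{i_k} ∘ ⋯ ∘ π_{i_1} (applying π_{i_1} first) does not depend on the chosen reduced word; denote it π_{w'}. Then the family of operators x ↦ π_{w'}(x·w), indexed by the pairs (w, w') ∈ W × W with D_R(w) ∩ D_L(w') = ∅, is a basis of the ℂ-vector space H(W). -/
open scoped Classical

noncomputable section

namespace HGA

variable {B : Type*} {W : Type*} [Group W] {M : CoxeterMatrix B}

/-- The Hecke group algebra `H(W)` : the unital ℂ-subalgebra of `End_ℂ(ℂ[W])`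
generated by the `σ_i` and the `π_i`. -/
def heckeGroupAlgebra (cs : CoxeterSystem M W) :
    Subalgebra ℂ (Module.End ℂ (MonoidAlgebra ℂ W)) :=
  Algebra.adjoin ℂ (Set.range (sigmaOp cs) ∪ Set.range (piOp cs))

/-- The linear extension to `ℂ[W]` of right multiplication by `w`. -/
def rOp (w : W) : Module.End ℂ (MonoidAlgebra ℂ W) :=
  (Finsupp.lift (MonoidAlgebra ℂ W) ℂ W fun u =>
    MonoidAlgebra.single (u * w) (1 : ℂ)) ∘ₗ
    (MonoidAlgebra.coeffLinearEquiv ℂ).toLinearMap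

/-- For a word `l = [i₁, …, i_k]`, the composition `π_{i_k} ∘ ⋯ ∘ π_{i_1}`
(applying `π_{i_1}` first); recall that in `Module.End` the product `f * g`
applies `g` first. -/
def piWord (cs : CoxeterSystem M W) (l : List B) : Module.End ℂ (MonoidAlgebra ℂ W) :=
  (l.reverse.map (piOp cs)).prod

end HGA

/-!
Every element of `H(W)` maps each space of elements `x ∈ ℂ[W]` with `x(s_j z) = -x(z)` into itself
(for `π_i` this is Deodhar's lifting property), and an endomorphism with this property is
determined, by induction on length, by its coefficients `f(w⁻¹)(w')` at the pairs `(w, w')` with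
`D_R(w) ∩ D_L(w') = ∅`. For a reduced word of `w'`, these coefficients of `π_{i_k} ⋯ π_{i_1}` form
the indicator of `(1, w')`. This proves independence of the reduced word, and makes the Demazure
product `u ⋆ w'` (the 0-Hecke action of reduced words on `W`) well defined. The coefficients of
`x ↦ π_{w'}(x w)` at `(v, v')` form the indicator of `v⁻¹ w ⋆ w' = v'`; ordered by `ℓ(w')` this
matrix is unitriangular, because via `(u ⋆ w)⁻¹ = w⁻¹ ⋆ u⁻¹` the stabilizer of `w'` lies in the
parabolic subgroup of its left descents, and the elements of a parabolic coset without descents in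
it are unique. A dimension count finishes the proof. The strong exchange condition used throughout
comes from Tits' reflection cocycle.
-/

namespace CoxeterSystem

variable {B : Type*} {W : Type*} [Group W] {M : CoxeterMatrix B} (cs : CoxeterSystem M W)

local prefix:100 "s" => cs.simple
local prefix:100 "π" => cs.wordProd
local prefix:100 "ℓ" => cs.length
local prefix:100 "ris" => cs.rightInvSeq
local prefix:100 "lis" => cs.leftInvSeq

section ReflectionCocycle

theorem simple_mul_mul_simple_eq_simple_iff (i : B) (t : W) : s i * t * s i = s i ↔ t = s i := by
  constructor
  · intro h
    simpa [mul_assoc] using congrArg (fun u => s i * u * s i) h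
  · rintro rfl
    simp

/-- The generator `s i` of Tits' permutation representation of `W` on `W × ℤˣ`. -/
def reflFlip (i : B) : Equiv.Perm (W × ℤˣ) :=
  Function.Involutive.toPerm (fun p => (s i * p.1 * s i, if p.1 = s i then -p.2 else p.2))
    fun ⟨t, e⟩ => by
      refine Prod.ext (by simp [mul_assoc]) ?_
      dsimp only
      rw [simple_mul_mul_simple_eq_simple_iff]
      split_ifs <;> simp

theorem reflFlip_apply (i : B) (t : W) (e : ℤˣ) :
    cs.reflFlip i (t, e) = (s i * t * s i, if t = s i then -e else e) := rfl

theorem prod_map_reflFlip_apply (ω : List B) (t : W) (e : ℤˣ) :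
    (ω.map cs.reflFlip).prod (t, e) =
      (π ω * t * (π ω)⁻¹, e * (-1) ^ (ris ω).count t) := by
  induction ω generalizing t e with
  | nil => simp
  | cons i ω ih =>
    have hconj : π ω * t * (π ω)⁻¹ = s i ↔ (π ω)⁻¹ * s i * π ω = t := by
      constructor <;> intro h <;> rw [← h] <;> group
    simp only [List.map_cons, List.prod_cons, Equiv.Perm.mul_apply, ih, reflFlip_apply,
      wordProd_cons, rightInvSeq, List.count_cons, beq_iff_eq, hconj, mul_inv_rev, inv_simple,
      Prod.mk.injEq]
    refine ⟨by group, ?_⟩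
    split_ifs <;> simp [pow_succ]

theorem leftInvSeq_eq_map_rightInvSeq (ω : List B) :
    lis ω = (ris ω).map fun u => π ω * u * (π ω)⁻¹ := by
  induction ω with
  | nil => rfl
  | cons i ω ih =>
    simp only [leftInvSeq, rightInvSeq, ih, List.map_cons, List.map_map, wordProd_cons,
      List.cons.injEq]
    refine ⟨by group, List.map_congr_left fun u _ => ?_⟩
    simp only [Function.comp_apply, MulAut.conj_apply, mul_inv_rev, inv_simple]
    group

theorem wordProd_alternatingWord_two_mul (i j : B) : π (alternatingWord i j (2 * M i j)) = 1 := by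
  rw [prod_alternatingWord_eq_mul_pow, if_pos (even_two_mul _), one_mul,
    Nat.mul_div_cancel_left _ two_pos, simple_mul_simple_pow]

/-- The inversion sequence of a braid relation word `(s i s j)^(M i j)` is periodic with
period `M i j`, so every reflection occurs in it an even number of times. -/
theorem even_count_rightInvSeq_alternatingWord (i j : B) (t : W) :
    Even ((ris (alternatingWord i j (2 * M i j))).count t) := by
  set m := M i j
  set L := ris (alternatingWord i j (2 * m))
  have hL : L = lis (alternatingWord i j (2 * m)) := by
    simp [leftInvSeq_eq_map_rightInvSeq, wordProd_alternatingWord_two_mul, L, m]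
  have hlen : L.length = 2 * m := by simp [L]
  have hentry (k : ℕ) (hk : k < 2 * m) : L[k]'(by omega) = s i * (s j * s i) ^ k := by
    simp only [hL, getElem_leftInvSeq_alternatingWord cs i j m k hk,
      prod_alternatingWord_eq_mul_pow, if_neg (Nat.not_even_two_mul_add_one k)]
    rw [show (2 * k + 1) / 2 = k by omega]
  have hm : (s j * s i) ^ m = 1 := by
    rw [show m = M j i from M.symmetric i j, simple_mul_simple_pow]
  have hperiod : L.drop m = L.take m := by
    refine List.ext_getElem (by simp [hlen]; omega) fun k h₁ h₂ => ?_
    simp only [List.getElem_drop, List.getElem_take]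
    rw [hentry _ (by simp [hlen] at h₁; omega), hentry _ (by simp [hlen] at h₂; omega), add_comm,
      pow_add, hm, mul_one]
  rw [← List.take_append_drop m L, hperiod, List.count_append]
  exact ⟨_, rfl⟩

theorem reflFlip_isLiftable : M.IsLiftable cs.reflFlip := by
  intro i j
  have hpow (n : ℕ) :
      (cs.reflFlip i * cs.reflFlip j) ^ n =
        ((alternatingWord i j (2 * n)).map cs.reflFlip).prod := by
    induction n with
    | zero => simp [alternatingWord]
    | succ n ih =>
      rw [show 2 * (n + 1) = 2 * n + 1 + 1 by ring, alternatingWord_succ', alternatingWord_succ',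
        if_neg (Nat.not_even_two_mul_add_one n), if_pos (even_two_mul n), pow_succ', ih]
      simp [mul_assoc]
  refine Equiv.ext fun ⟨t, e⟩ => ?_
  rw [hpow, prod_map_reflFlip_apply, wordProd_alternatingWord_two_mul,
    (even_count_rightInvSeq_alternatingWord cs i j t).neg_one_pow]
  simp

/-- Tits' representation of `W` on `W × ℤˣ`: `w • (t, e) = (w t w⁻¹, e η(w, t))`. -/
def reflRep : W →* Equiv.Perm (W × ℤˣ) := cs.lift ⟨cs.reflFlip, cs.reflFlip_isLiftable⟩

/-- The reflection cocycle `η(w, t)`, which is `-1` exactly when `t` is a right inversion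
of `w`. -/
def reflSign (w t : W) : ℤˣ := (cs.reflRep w (t, 1)).2

theorem reflRep_wordProd (ω : List B) : cs.reflRep (π ω) = (ω.map cs.reflFlip).prod := by
  simp [wordProd, map_list_prod, List.map_map, reflRep, Function.comp_def]

theorem reflSign_wordProd (ω : List B) (t : W) :
    cs.reflSign (π ω) t = (-1) ^ (ris ω).count t := by
  simp [reflSign, reflRep_wordProd, prod_map_reflFlip_apply]

theorem reflRep_apply (w t : W) (e : ℤˣ) :
    cs.reflRep w (t, e) = (w * t * w⁻¹, e * cs.reflSign w t) := by
  obtain ⟨ω, -, rfl⟩ := cs.exists_isReduced w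
  rw [reflSign_wordProd, reflRep_wordProd, prod_map_reflFlip_apply]

theorem reflSign_mul (u v t : W) :
    cs.reflSign (u * v) t = cs.reflSign v t * cs.reflSign u (v * t * v⁻¹) := by
  rw [reflSign, map_mul, Equiv.Perm.mul_apply, reflRep_apply cs v, one_mul, reflRep_apply]

theorem reflSign_simple (i : B) (t : W) :
    cs.reflSign (s i) t = if t = s i then -1 else 1 := by
  simp [reflSign, reflRep, reflFlip_apply]

theorem reflSign_one (t : W) : cs.reflSign 1 t = 1 := by
  simp [reflSign]

theorem reflSign_self {t : W} (ht : cs.IsReflection t) : cs.reflSign t t = -1 := by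
  obtain ⟨w, i, rfl⟩ := ht
  have hconj : w⁻¹ * (w * s i * w⁻¹) * w⁻¹⁻¹ = s i := by group
  have hinv : cs.reflSign w⁻¹ (w * s i * w⁻¹) * cs.reflSign w (s i) = 1 := by
    have := cs.reflSign_mul w w⁻¹ (w * s i * w⁻¹)
    rwa [mul_inv_cancel, reflSign_one, hconj, eq_comm] at this
  rw [reflSign_mul, hconj, reflSign_mul, reflSign_simple, if_pos rfl, inv_simple,
    simple_mul_simple_cancel_right, mul_left_comm, hinv, mul_one]

theorem reflSign_wordProd_eq_neg_one_iff {ω : List B} (hω : cs.IsReduced ω) (t : W) :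
    cs.reflSign (π ω) t = -1 ↔ t ∈ ris ω := by
  rw [reflSign_wordProd]
  by_cases ht : t ∈ ris ω
  · simp [ht, List.count_eq_one_of_mem hω.nodup_rightInvSeq ht]
  · simp [ht, List.count_eq_zero_of_not_mem ht]

theorem isRightInversion_of_reflSign_eq_neg_one {w t : W} (h : cs.reflSign w t = -1) :
    cs.IsRightInversion w t := by
  obtain ⟨ω, hω, rfl⟩ := cs.exists_isReduced w
  exact cs.isRightInversion_of_mem_rightInvSeq hω ((cs.reflSign_wordProd_eq_neg_one_iff hω t).1 h)

theorem reflSign_eq_neg_one_iff {t : W} (ht : cs.IsReflection t) (w : W) :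
    cs.reflSign w t = -1 ↔ cs.IsRightInversion w t := by
  refine ⟨cs.isRightInversion_of_reflSign_eq_neg_one, fun hw => ?_⟩
  have hmul : cs.reflSign (w * t) t = -cs.reflSign w t := by
    rw [reflSign_mul, reflSign_self cs ht, mul_inv_cancel_right]
    simp
  rcases Int.units_eq_one_or (cs.reflSign w t) with h | h
  · rw [h] at hmul
    have := (cs.isRightInversion_of_reflSign_eq_neg_one hmul).2
    rw [mul_assoc, ht.mul_self, mul_one] at this
    exact absurd hw.2 (by omega)
  · exact h

theorem reflSign_eq_one_iff {t : W} (ht : cs.IsReflection t) (w : W) :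
    cs.reflSign w t = 1 ↔ ¬ cs.IsRightInversion w t := by
  rw [← reflSign_eq_neg_one_iff cs ht]
  rcases Int.units_eq_one_or (cs.reflSign w t) with h | h <;> simp [h]

/-- The strong exchange condition. -/
theorem mem_rightInvSeq_of_isRightInversion {ω : List B} (hω : cs.IsReduced ω) {t : W}
    (h : cs.IsRightInversion (π ω) t) : t ∈ ris ω :=
  (cs.reflSign_wordProd_eq_neg_one_iff hω t).1 ((cs.reflSign_eq_neg_one_iff h.1 _).2 h)

theorem IsRightInversion.mul_left_of_not {u v t : W} (hv : cs.IsRightInversion v t)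
    (hu : ¬ cs.IsRightInversion u (v * t * v⁻¹)) : cs.IsRightInversion (u * v) t := by
  rw [← reflSign_eq_neg_one_iff cs hv.1, reflSign_mul,
    (reflSign_eq_neg_one_iff cs hv.1 v).2 hv, (reflSign_eq_one_iff cs (hv.1.conj v) u).2 hu,
    mul_one]

end ReflectionCocycle

section Exchange

theorem rightInvSeq_append (ω ω' : List B) :
    ris (ω ++ ω') = (ris ω).map (fun u => (π ω')⁻¹ * u * π ω') ++ ris ω' := by
  induction ω with
  | nil => simp
  | cons i ω ih =>
    simp only [List.cons_append, rightInvSeq, ih, wordProd_append, List.map_cons, mul_inv_rev]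
    congr 1
    group

theorem isReduced_concat_iff (ω : List B) (i : B) :
    cs.IsReduced (ω ++ [i]) ↔ cs.IsReduced ω ∧ ¬ cs.IsRightDescent (π ω) i := by
  have hle := cs.length_wordProd_le ω
  simp only [IsReduced, wordProd_append, wordProd_singleton, List.length_append,
    List.length_singleton, not_isRightDescent_iff]
  rcases cs.length_mul_simple (π ω) i with h | h <;> omega

theorem isReduced_cons_iff (ω : List B) (i : B) :
    cs.IsReduced (i :: ω) ↔ cs.IsReduced ω ∧ ¬ cs.IsLeftDescent (π ω) i := by
  have hle := cs.length_wordProd_le ω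
  simp only [IsReduced, wordProd_cons, List.length_cons, not_isLeftDescent_iff]
  rcases cs.length_simple_mul (π ω) i with h | h <;> omega

theorem exists_wordProd_mul_eq_eraseIdx {ω : List B} {t : W} (ht : t ∈ ris ω) :
    ∃ k < ω.length, π ω * t = π (ω.eraseIdx k) := by
  obtain ⟨k, hk, rfl⟩ := List.getElem_of_mem ht
  refine ⟨k, by simpa using hk, ?_⟩
  rw [← List.getD_eq_getElem _ 1 hk, wordProd_mul_getD_rightInvSeq]

theorem length_wordProd_mul_lt {ω : List B} {t : W} (ht : t ∈ ris ω) :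
    ℓ (π ω * t) < ω.length := by
  obtain ⟨k, hk, h⟩ := cs.exists_wordProd_mul_eq_eraseIdx ht
  have := cs.length_wordProd_le (ω.eraseIdx k)
  rw [List.length_eraseIdx_of_lt hk, ← h] at this
  omega

/-- A case of Deodhar's lifting property. -/
theorem simple_mul_eq_mul_simple_of_isRightDescent {z : W} {i j : B}
    (h : cs.IsRightDescent (s j * z) i) (h' : ¬ cs.IsRightDescent z i) : s j * z = z * s i := by
  rw [isRightDescent_iff] at h
  rw [not_isRightDescent_iff] at h'
  have h₁ := cs.length_simple_mul (z * s i) j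
  rw [← mul_assoc] at h₁
  have hj : ℓ (s j * z) = ℓ z + 1 := by
    rcases cs.length_simple_mul z j with h₂ | h₂ <;> omega
  obtain ⟨ω, hω, rfl⟩ := cs.exists_isReduced z
  have hred : cs.IsReduced (j :: ω) :=
    (cs.isReduced_cons_iff ω j).2 ⟨hω, (cs.not_isLeftDescent_iff).2 hj⟩
  have hinv : cs.IsRightInversion (π (j :: ω)) (s i) := by
    rw [isRightInversion_simple_iff_isRightDescent, isRightDescent_iff, wordProd_cons]
    omega
  rcases List.mem_cons.1 (cs.mem_rightInvSeq_of_isRightInversion hred hinv) with h | h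
  · rw [h]
    group
  · have := (cs.isRightInversion_of_mem_rightInvSeq hω h).2
    omega

theorem exists_mul_eq_of_isRightDescent_mul {y v : W} {i : B}
    (hyv : ℓ (y * v) = ℓ y + ℓ v) (hv : ¬ cs.IsRightDescent v i)
    (h : cs.IsRightDescent (y * v) i) : ∃ y', y * v = y' * (v * s i) ∧ ℓ y' + 1 = ℓ y := by
  obtain ⟨α, hα, rfl⟩ := cs.exists_isReduced y
  obtain ⟨β, hβ, rfl⟩ := cs.exists_isReduced v
  have hred : cs.IsReduced (α ++ β) := by
    rw [IsReduced, wordProd_append, hyv, hα, hβ, List.length_append]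
  rw [← wordProd_append, ← isRightInversion_simple_iff_isRightDescent] at h
  have hmem := cs.mem_rightInvSeq_of_isRightInversion hred h
  rw [rightInvSeq_append] at hmem
  rcases List.mem_append.1 hmem with hm | hm
  · obtain ⟨r, hr, hri⟩ := List.mem_map.1 hm
    have hr2 : r * r = 1 := (cs.isReflection_of_mem_rightInvSeq α hr).mul_self
    have hkey : π α * π β = π α * r * (π β * s i) := by
      rw [← hri, show π α * r * (π β * ((π β)⁻¹ * r * π β)) = π α * (r * r) * π β by group,
        hr2, mul_one]
    refine ⟨π α * r, hkey, le_antisymm ?_ ?_⟩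
    · have := cs.length_wordProd_mul_lt hr
      rw [hα]
      omega
    · have h2 := cs.length_mul_le (π α * r) (π β * s i)
      rw [← hkey, hyv, (cs.not_isRightDescent_iff).1 hv] at h2
      omega
  · exact absurd ((isRightInversion_simple_iff_isRightDescent cs _ _).1
      (cs.isRightInversion_of_mem_rightInvSeq hβ hm)) hv

/-- The deletion condition. -/
theorem exists_sublist_isReduced (ω : List B) :
    ∃ ω', ω'.Sublist ω ∧ cs.IsReduced ω' ∧ π ω' = π ω := by
  induction ω using List.reverseRecOn with
  | nil => exact ⟨[], List.Sublist.slnil, by simp [IsReduced], rfl⟩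
  | append_singleton ω i ih =>
    obtain ⟨ω', hsub, hred, hprod⟩ := ih
    by_cases hi : cs.IsRightDescent (π ω') i
    · have hinv := (isRightInversion_simple_iff_isRightDescent cs _ _).2 hi
      obtain ⟨k, hk, herase⟩ :=
        cs.exists_wordProd_mul_eq_eraseIdx (cs.mem_rightInvSeq_of_isRightInversion hred hinv)
      refine ⟨ω'.eraseIdx k, ((List.eraseIdx_sublist ω' k).trans hsub).trans
        (List.sublist_append_left ω [i]), ?_, ?_⟩
      · rw [IsReduced, ← herase, List.length_eraseIdx_of_lt hk, ← hred.eq]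
        rw [isRightDescent_iff] at hi
        omega
      · rw [← herase, hprod, wordProd_append, wordProd_singleton]
    · exact ⟨ω' ++ [i], hsub.append (List.Sublist.refl [i]),
        (cs.isReduced_concat_iff ω' i).2 ⟨hred, hi⟩,
        by rw [wordProd_append, wordProd_append, hprod]⟩

end Exchange

section DemazureAction

/-- The right action of `s i` in the 0-Hecke monoid: `v ⋆ s i`, the larger of `v` and `v s i`. -/
def demazureStep (v : W) (i : B) : W := if cs.IsRightDescent v i then v else v * s i

def demazureAct (u : W) (ω : List B) : W := ω.foldl cs.demazureStep u

@[simp] theorem demazureAct_nil (u : W) : cs.demazureAct u [] = u := rfl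

@[simp] theorem demazureAct_cons (u : W) (i : B) (ω : List B) :
    cs.demazureAct u (i :: ω) = cs.demazureAct (cs.demazureStep u i) ω := rfl

theorem demazureAct_append (u : W) (ω ω' : List B) :
    cs.demazureAct u (ω ++ ω') = cs.demazureAct (cs.demazureAct u ω) ω' := List.foldl_append

theorem demazureAct_concat (u : W) (ω : List B) (i : B) :
    cs.demazureAct u (ω ++ [i]) = cs.demazureStep (cs.demazureAct u ω) i := by
  rw [demazureAct_append]
  rfl

variable {cs} in
theorem demazureStep_of_isRightDescent {v : W} {i : B} (h : cs.IsRightDescent v i) :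
    cs.demazureStep v i = v := if_pos h

variable {cs} in
theorem demazureStep_of_not_isRightDescent {v : W} {i : B} (h : ¬ cs.IsRightDescent v i) :
    cs.demazureStep v i = v * s i := if_neg h

theorem isRightDescent_demazureStep (v : W) (i : B) :
    cs.IsRightDescent (cs.demazureStep v i) i := by
  by_cases h : cs.IsRightDescent v i
  · rwa [demazureStep_of_isRightDescent h]
  · rwa [demazureStep_of_not_isRightDescent h, isRightDescent_iff_not_isRightDescent_mul,
      simple_mul_simple_cancel_right]

theorem demazureStep_eq_iff (v z : W) (i : B) :
    cs.demazureStep v i = z ↔ cs.IsRightDescent z i ∧ (v = z ∨ v = z * s i) := by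
  constructor
  · rintro rfl
    refine ⟨cs.isRightDescent_demazureStep v i, ?_⟩
    by_cases h : cs.IsRightDescent v i
    · exact .inl (demazureStep_of_isRightDescent h).symm
    · rw [demazureStep_of_not_isRightDescent h, simple_mul_simple_cancel_right]
      exact .inr rfl
  · rintro ⟨hz, rfl | rfl⟩
    · exact demazureStep_of_isRightDescent hz
    · rw [isRightDescent_iff_not_isRightDescent_mul] at hz
      rw [demazureStep_of_not_isRightDescent hz, simple_mul_simple_cancel_right]

theorem length_le_demazureStep (v : W) (i : B) : ℓ v ≤ ℓ (cs.demazureStep v i) := by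
  by_cases h : cs.IsRightDescent v i
  · rw [demazureStep_of_isRightDescent h]
  · rw [demazureStep_of_not_isRightDescent h, (cs.not_isRightDescent_iff).1 h]
    omega

theorem length_le_demazureAct (u : W) (ω : List B) : ℓ u ≤ ℓ (cs.demazureAct u ω) := by
  induction ω generalizing u with
  | nil => rfl
  | cons i ω ih => exact (cs.length_le_demazureStep u i).trans (ih _)

theorem isLeftDescent_demazureStep {v : W} {j : B} (h : cs.IsLeftDescent v j) (i : B) :
    cs.IsLeftDescent (cs.demazureStep v i) j := by
  by_cases hi : cs.IsRightDescent v i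
  · rwa [demazureStep_of_isRightDescent hi]
  · have := cs.length_mul_le (s j * v) (s i)
    rw [isLeftDescent_iff] at h
    rw [demazureStep_of_not_isRightDescent hi, IsLeftDescent, ← mul_assoc,
      (cs.not_isRightDescent_iff).1 hi]
    rw [length_simple] at this
    omega

theorem isLeftDescent_demazureAct {v : W} {j : B} (h : cs.IsLeftDescent v j) (ω : List B) :
    cs.IsLeftDescent (cs.demazureAct v ω) j := by
  induction ω generalizing v with
  | nil => exact h
  | cons i ω ih => exact ih (cs.isLeftDescent_demazureStep h i)

theorem demazureAct_eq_mul_of_length_add {ω : List B} (hω : cs.IsReduced ω) {u : W}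
    (h : ℓ (u * π ω) = ℓ u + ℓ (π ω)) : cs.demazureAct u ω = u * π ω := by
  induction ω using List.reverseRecOn with
  | nil => simp
  | append_singleton ω i ih =>
    obtain ⟨hω', hi⟩ := (cs.isReduced_concat_iff ω i).1 hω
    rw [wordProd_append, wordProd_singleton, ← mul_assoc,
      (cs.not_isRightDescent_iff).1 hi] at h
    have hle₁ := cs.length_mul_le u (π ω)
    have hle₂ := cs.length_mul_simple (u * π ω) i
    have hadd : ℓ (u * π ω) = ℓ u + ℓ (π ω) := by omega
    have hnd : ¬ cs.IsRightDescent (u * π ω) i := by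
      rw [not_isRightDescent_iff]
      omega
    rw [demazureAct_concat, ih hω' hadd, demazureStep_of_not_isRightDescent hnd,
      wordProd_append, wordProd_singleton, mul_assoc]

theorem demazureAct_one {ω : List B} (hω : cs.IsReduced ω) : cs.demazureAct 1 ω = π ω := by
  rw [cs.demazureAct_eq_mul_of_length_add hω (by simp), one_mul]

theorem exists_demazureAct_eq_mul_wordProd {ω : List B} (hω : cs.IsReduced ω) (x : W) :
    ∃ y, cs.demazureAct x ω = y * π ω ∧ ℓ (y * π ω) = ℓ y + ℓ (π ω) := by
  induction ω using List.reverseRecOn with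
  | nil => exact ⟨x, by simp⟩
  | append_singleton ω i ih =>
    obtain ⟨hω', hi⟩ := (cs.isReduced_concat_iff ω i).1 hω
    obtain ⟨y, hy, hadd⟩ := ih hω'
    have hlen : ℓ (π ω * s i) = ℓ (π ω) + 1 := (cs.not_isRightDescent_iff).1 hi
    rw [demazureAct_concat, hy, wordProd_append, wordProd_singleton]
    by_cases hd : cs.IsRightDescent (y * π ω) i
    · obtain ⟨y', hy', hlen'⟩ := cs.exists_mul_eq_of_isRightDescent_mul hadd hi hd
      refine ⟨y', by rw [demazureStep_of_isRightDescent hd, hy'], ?_⟩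
      rw [← hy', hadd, hlen]
      omega
    · refine ⟨y, by rw [demazureStep_of_not_isRightDescent hd, mul_assoc], ?_⟩
      rw [← mul_assoc, (cs.not_isRightDescent_iff).1 hd, hadd, hlen]
      omega

theorem isRightDescent_of_demazureAct_eq_self {x : W} {ω : List B}
    (h : cs.demazureAct x ω = x) : ∀ i ∈ ω, cs.IsRightDescent x i := by
  induction ω with
  | nil => simp
  | cons j ω ih =>
    have hj : cs.IsRightDescent x j := by
      by_contra hj
      have := cs.length_le_demazureAct (x * s j) ω
      rw [← demazureStep_of_not_isRightDescent hj, ← demazureAct_cons, h,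
        demazureStep_of_not_isRightDescent hj, (cs.not_isRightDescent_iff).1 hj] at this
      omega
    rw [demazureAct_cons, demazureStep_of_isRightDescent hj] at h
    simpa [hj] using ih h

end DemazureAction

section ParabolicCoset

/-- The left coset `w W_P` of the standard parabolic subgroup generated by `{s i | P i}`. -/
def parabolicCoset (P : B → Prop) (w : W) : Set W :=
  {v | ∃ ω : List B, (∀ i ∈ ω, P i) ∧ v = w * π ω}

variable {P : B → Prop} {w : W}

theorem self_mem_parabolicCoset : w ∈ cs.parabolicCoset P w := ⟨[], by simp, by simp⟩

theorem mul_wordProd_mem_parabolicCoset {v : W} (hv : v ∈ cs.parabolicCoset P w) {ω : List B}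
    (hω : ∀ i ∈ ω, P i) : v * π ω ∈ cs.parabolicCoset P w := by
  obtain ⟨α, hα, rfl⟩ := hv
  refine ⟨α ++ ω, fun i hi => ?_, by rw [wordProd_append, mul_assoc]⟩
  rcases List.mem_append.1 hi with h | h
  exacts [hα i h, hω i h]

/-- Write `v = m x` with `x = s_{i₁} ⋯ s_{i_k} ∈ W_P` reduced. Minimality gives `m t > m` for
the reflection `t = x s_{i_k} x⁻¹ ∈ W_P`, so the cocycle carries the right descent `i_k` of `x`
over to `m x`. -/
theorem exists_isRightDescent_of_ne_min {m v : W} (hm : m ∈ cs.parabolicCoset P w)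
    (hmin : ∀ u ∈ cs.parabolicCoset P w, ℓ m ≤ ℓ u) (hv : v ∈ cs.parabolicCoset P w)
    (hne : v ≠ m) : ∃ i, P i ∧ cs.IsRightDescent v i := by
  obtain ⟨β, hβ, rfl⟩ := hm
  obtain ⟨α, hα, rfl⟩ := hv
  obtain ⟨ω, hsub, hred, hprod⟩ := cs.exists_sublist_isReduced (β.reverse ++ α)
  have hωP : ∀ i ∈ ω, P i := fun i hi => by
    rcases List.mem_append.1 (hsub.subset hi) with h | h
    exacts [hβ i (List.mem_reverse.1 h), hα i h]
  have hv : w * π α = w * π β * π ω := by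
    rw [hprod, wordProd_append, wordProd_reverse]
    group
  rcases List.eq_nil_or_concat' ω with rfl | ⟨ω', j, rfl⟩
  · exact absurd (by simpa using hv) hne
  refine ⟨j, hωP j (by simp), ?_⟩
  obtain ⟨-, hj⟩ := (cs.isReduced_concat_iff ω' j).1 hred
  have hx : cs.IsRightInversion (π (ω' ++ [j])) (s j) := by
    rwa [isRightInversion_simple_iff_isRightDescent, wordProd_append, wordProd_singleton,
      isRightDescent_iff_not_isRightDescent_mul, simple_mul_simple_cancel_right]
  have hconj : π (ω' ++ [j]) * s j * (π (ω' ++ [j]))⁻¹ = π (ω' ++ (ω' ++ [j]).reverse) := by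
    simp only [wordProd_append, wordProd_reverse, wordProd_singleton, mul_inv_rev, inv_simple,
      mul_assoc, simple_mul_simple_cancel_left]
  have hm : ¬ cs.IsRightInversion (w * π β) (π (ω' ++ [j]) * s j * (π (ω' ++ [j]))⁻¹) :=
    fun h => by
      have := hmin _ (cs.mul_wordProd_mem_parabolicCoset ⟨β, hβ, rfl⟩
        (ω := ω' ++ (ω' ++ [j]).reverse) fun i hi => by
          rcases List.mem_append.1 hi with h | h
          exacts [hωP i (List.mem_append_left _ h), hωP i (List.mem_reverse.1 h)])
      rw [← hconj] at this
      exact absurd h.2 (by omega)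
  rw [hv, ← isRightInversion_simple_iff_isRightDescent]
  exact IsRightInversion.mul_left_of_not cs hx hm

theorem eq_of_mem_parabolicCoset {v₁ v₂ : W} (hv₁ : v₁ ∈ cs.parabolicCoset P w)
    (hv₂ : v₂ ∈ cs.parabolicCoset P w) (h₁ : ∀ i, P i → ¬ cs.IsRightDescent v₁ i)
    (h₂ : ∀ i, P i → ¬ cs.IsRightDescent v₂ i) : v₁ = v₂ := by
  obtain ⟨m, hm, hmin⟩ := (InvImage.wf cs.length wellFounded_lt).has_min _ ⟨v₁, hv₁⟩
  have hmin' : ∀ u ∈ cs.parabolicCoset P w, ℓ m ≤ ℓ u := fun u hu => not_lt.1 (hmin u hu)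
  have key (v : W) (hv : v ∈ cs.parabolicCoset P w) (h : ∀ i, P i → ¬ cs.IsRightDescent v i) :
      v = m := by
    by_contra hne
    obtain ⟨i, hi, hd⟩ := cs.exists_isRightDescent_of_ne_min hm hmin' hv hne
    exact h i hi hd
  rw [key v₁ hv₁ h₁, key v₂ hv₂ h₂]

end ParabolicCoset

end CoxeterSystem

namespace HGA

open CoxeterSystem MonoidAlgebra

theorem ext_single {G : Type*} {f g : Module.End ℂ (MonoidAlgebra ℂ G)}
    (h : ∀ u, f (single u 1) = g (single u 1)) : f = g :=
  lhom_ext' fun u => LinearMap.ext_ring (h u)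

variable {B : Type*} {W : Type*} [Group W] {M : CoxeterMatrix B} (cs : CoxeterSystem M W)

local prefix:100 "s" => cs.simple
local prefix:100 "π" => cs.wordProd
local prefix:100 "ℓ" => cs.length

section Operators

theorem lift_comp_coeff_single (f : W → MonoidAlgebra ℂ W) (u : W) :
    (Finsupp.lift (MonoidAlgebra ℂ W) ℂ W f ∘ₗ (coeffLinearEquiv ℂ).toLinearMap)
      (single u 1) = f u := by
  simp [coeffLinearEquiv]

theorem sigmaOp_single_s6 (i : B) (u : W) : sigmaOp cs i (single u 1) = single (u * s i) 1 :=
  lift_comp_coeff_single _ u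

theorem piOp_single_s6 (i : B) (u : W) :
    piOp cs i (single u 1) = single (cs.demazureStep u i) 1 := by
  rw [piOp, lift_comp_coeff_single, demazureStep]
  split_ifs <;> rfl

theorem rOp_single (w u : W) : rOp w (single u (1 : ℂ)) = single (u * w) 1 :=
  lift_comp_coeff_single _ u

theorem sigmaOp_coeff (i : B) (x : MonoidAlgebra ℂ W) (z : W) :
    (sigmaOp cs i x).coeff z = x.coeff (z * s i) := by
  induction x using MonoidAlgebra.induction_linear with
  | zero => simp
  | add x y hx hy => simp [hx, hy]
  | single u c =>
    have hiff : u * s i = z ↔ u = z * s i := by rw [← eq_mul_inv_iff_mul_eq, inv_simple]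
    rw [show single u c = c • single u 1 by simp, map_smul, sigmaOp_single_s6]
    simp [coeff_single, Finsupp.single_apply, hiff]

theorem piOp_coeff (i : B) (x : MonoidAlgebra ℂ W) (z : W) :
    (piOp cs i x).coeff z =
      if cs.IsRightDescent z i then x.coeff z + x.coeff (z * s i) else 0 := by
  induction x using MonoidAlgebra.induction_linear with
  | zero => simp
  | add x y hx hy =>
    simp only [map_add, coeff_add, Finsupp.add_apply, hx, hy]
    split_ifs <;> ring
  | single u c =>
    have hne : z ≠ z * s i := fun h => cs.length_mul_simple_ne z i (by rw [← h])
    rw [show single u c = c • single u 1 by simp, map_smul, piOp_single_s6]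
    simp only [coeff_smul, coeff_single, Finsupp.smul_apply, Finsupp.single_apply,
      demazureStep_eq_iff, smul_eq_mul]
    by_cases hz : cs.IsRightDescent z i <;> by_cases h₁ : u = z <;> by_cases h₂ : u = z * s i <;>
      simp_all

end Operators

section Antisymmetry

def antisymmetric (j : B) : Submodule ℂ (MonoidAlgebra ℂ W) where
  carrier := {x | ∀ z, x.coeff (s j * z) = - x.coeff z}
  add_mem' hx hy z := by simp [hx z, hy z, add_comm]
  zero_mem' z := by simp
  smul_mem' c x hx z := by simp [hx z]

def antisymmetryPreserving : Subalgebra ℂ (Module.End ℂ (MonoidAlgebra ℂ W)) where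
  carrier := {f | ∀ j, ∀ x ∈ antisymmetric cs j, f x ∈ antisymmetric cs j}
  mul_mem' hf hg j x hx := hf j _ (hg j x hx)
  one_mem' _ _ hx := hx
  add_mem' hf hg j x hx := add_mem (hf j x hx) (hg j x hx)
  zero_mem' _ _ _ := zero_mem _
  algebraMap_mem' c _ _ hx := Submodule.smul_mem _ c hx

theorem sigmaOp_mem_antisymmetryPreserving (i : B) :
    sigmaOp cs i ∈ antisymmetryPreserving cs := fun j x hx z => by
  rw [sigmaOp_coeff, sigmaOp_coeff, mul_assoc, hx]

/-- The only delicate case is when exactly one of `z`, `s j z` has right descent `i`: then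
the lifting property gives `s j z = z s i`. -/
theorem piOp_mem_antisymmetryPreserving (i : B) :
    piOp cs i ∈ antisymmetryPreserving cs := fun j x hx z => by
  rw [piOp_coeff, piOp_coeff]
  by_cases h₁ : cs.IsRightDescent (s j * z) i <;> by_cases h₀ : cs.IsRightDescent z i
  · rw [if_pos h₁, if_pos h₀, hx, mul_assoc, hx]
    ring
  · have hz := cs.simple_mul_eq_mul_simple_of_isRightDescent h₁ h₀
    rw [if_pos h₁, if_neg h₀, hz, simple_mul_simple_cancel_right, ← hz, hx]
    ring
  · have hz := cs.simple_mul_eq_mul_simple_of_isRightDescent (z := s j * z)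
      (by rwa [simple_mul_simple_cancel_left]) h₁
    rw [simple_mul_simple_cancel_left] at hz
    rw [if_neg h₁, if_pos h₀, hz, simple_mul_simple_cancel_right, ← hz, hx]
    ring
  · simp [h₁, h₀]

theorem heckeGroupAlgebra_le_antisymmetryPreserving :
    heckeGroupAlgebra cs ≤ antisymmetryPreserving cs := by
  refine Algebra.adjoin_le ?_
  rintro f (⟨i, rfl⟩ | ⟨i, rfl⟩)
  exacts [sigmaOp_mem_antisymmetryPreserving cs i, piOp_mem_antisymmetryPreserving cs i]

theorem single_sub_single_mem_antisymmetric (j : B) (u : W) :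
    single u 1 - single (s j * u) 1 ∈ antisymmetric cs j := fun z => by
  have h₁ : u = s j * z ↔ s j * u = z := by
    constructor <;> rintro rfl <;> simp
  simp only [coeff_sub, coeff_single, Finsupp.sub_apply, Finsupp.single_apply,
    mul_right_inj, h₁]
  split_ifs <;> simp

theorem eq_zero_of_mem_antisymmetric {u : W} {x : MonoidAlgebra ℂ W}
    (hx : ∀ j, cs.IsLeftDescent u j → x ∈ antisymmetric cs j)
    (h : ∀ z, (∀ j, cs.IsLeftDescent u j → ¬ cs.IsLeftDescent z j) → x.coeff z = 0) :
    x = 0 := by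
  suffices ∀ n z, ℓ z = n → x.coeff z = 0 from
    coeff_injective (Finsupp.ext fun z => this _ z rfl)
  intro n
  induction n using Nat.strong_induction_on with
  | _ n ih =>
    rintro z rfl
    by_cases hz : ∃ j, cs.IsLeftDescent u j ∧ cs.IsLeftDescent z j
    · obtain ⟨j, hu, hz⟩ := hz
      have := hx j hu (s j * z)
      rw [simple_mul_simple_cancel_left] at this
      rw [this, ih _ (by rw [isLeftDescent_iff] at hz; omega) _ rfl, neg_zero]
    · exact h z fun j hu hz' => hz ⟨j, hu, hz'⟩

end Antisymmetry

section Coordinates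

abbrev AdmissiblePair :=
  {p : W × W // ∀ i : B, ¬ (cs.IsRightDescent p.1 i ∧ cs.IsLeftDescent p.2 i)}

def admissibleCoords : Module.End ℂ (MonoidAlgebra ℂ W) →ₗ[ℂ] (AdmissiblePair cs → ℂ) where
  toFun f p := (f (single p.1.1⁻¹ 1)).coeff p.1.2
  map_add' f g := by
    ext p
    simp
  map_smul' c f := by
    ext p
    simp

theorem admissibleCoords_apply (f : Module.End ℂ (MonoidAlgebra ℂ W)) (p : AdmissiblePair cs) :
    admissibleCoords cs f p = (f (single p.1.1⁻¹ 1)).coeff p.1.2 := rfl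

/-- By induction on `ℓ u`: `(f - g) (single u 1)` is antisymmetric for every left descent of
`u`, and its remaining coefficients are admissible coordinates. -/
theorem eq_of_admissibleCoords_eq {f g : Module.End ℂ (MonoidAlgebra ℂ W)}
    (hf : f ∈ antisymmetryPreserving cs) (hg : g ∈ antisymmetryPreserving cs)
    (h : admissibleCoords cs f = admissibleCoords cs g) : f = g := by
  rw [← sub_eq_zero]
  have hd := sub_mem hf hg
  have hcoords : admissibleCoords cs (f - g) = 0 := by rw [map_sub, h, sub_self]
  suffices ∀ n u, ℓ u = n → (f - g) (single u 1) = 0 from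
    ext_single fun u => by simpa using this _ u rfl
  intro n
  induction n using Nat.strong_induction_on with
  | _ n ih =>
    rintro u rfl
    refine eq_zero_of_mem_antisymmetric cs (u := u) (fun j hj => ?_) (fun z hz => ?_)
    · have := hd j _ (single_sub_single_mem_antisymmetric cs j u)
      rwa [map_sub, ih _ (by rw [isLeftDescent_iff] at hj; omega) (s j * u) rfl, sub_zero]
        at this
    · have hadm : ∀ i, ¬ (cs.IsRightDescent u⁻¹ i ∧ cs.IsLeftDescent z i) :=
        fun i hi => hz i (cs.isRightDescent_inv_iff.1 hi.1) hi.2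
      simpa [admissibleCoords_apply] using congrFun hcoords ⟨(u⁻¹, z), hadm⟩

end Coordinates

section WordOperators

theorem piWord_cons (i : B) (l : List B) : piWord cs (i :: l) = piWord cs l * piOp cs i := by
  simp [piWord]

theorem piWord_single (l : List B) (u : W) :
    piWord cs l (single u 1) = single (cs.demazureAct u l) 1 := by
  induction l generalizing u with
  | nil => rfl
  | cons i l ih => rw [piWord_cons, Module.End.mul_apply, piOp_single_s6, ih, demazureAct_cons]

theorem piWord_mem_heckeGroupAlgebra (l : List B) : piWord cs l ∈ heckeGroupAlgebra cs := by
  induction l with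
  | nil => exact one_mem _
  | cons i l ih =>
    rw [piWord_cons]
    exact mul_mem ih (Algebra.subset_adjoin (.inr ⟨i, rfl⟩))

theorem rOp_mul (u v : W) : rOp (u * v) = rOp v * rOp u :=
  ext_single fun x => by simp [rOp_single, mul_assoc]

theorem rOp_mem_heckeGroupAlgebra (w : W) : rOp w ∈ heckeGroupAlgebra cs := by
  induction w using cs.simple_induction_left with
  | one =>
    rw [show rOp (1 : W) = 1 from ext_single fun u => by simp [rOp_single]]
    exact one_mem _
  | mul_simple_left w i ih =>
    rw [rOp_mul]
    exact mul_mem ih (Algebra.subset_adjoin (.inl ⟨i, rfl⟩))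

theorem admissibleCoords_piWord {l : List B} (hl : cs.IsReduced l) (p : AdmissiblePair cs) :
    admissibleCoords cs (piWord cs l) p = if p.1 = (1, π l) then 1 else 0 := by
  obtain ⟨⟨w, w'⟩, hp⟩ := p
  simp only [admissibleCoords_apply, piWord_single, coeff_single, Finsupp.single_apply]
  by_cases hw : w = 1
  · simp [hw, cs.demazureAct_one hl, eq_comm]
  · obtain ⟨j, hj⟩ := cs.exists_leftDescent_of_ne_one (inv_ne_one.2 hw)
    have hne : cs.demazureAct w⁻¹ l ≠ w' := fun h =>
      hp j ⟨cs.isLeftDescent_inv_iff.1 hj, h ▸ cs.isLeftDescent_demazureAct hj l⟩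
    simp [hw, hne]

theorem piWord_eq_of_wordProd_eq {l₁ l₂ : List B} (h₁ : cs.IsReduced l₁) (h₂ : cs.IsReduced l₂)
    (h : π l₁ = π l₂) : piWord cs l₁ = piWord cs l₂ :=
  eq_of_admissibleCoords_eq cs
    (heckeGroupAlgebra_le_antisymmetryPreserving cs (piWord_mem_heckeGroupAlgebra cs l₁))
    (heckeGroupAlgebra_le_antisymmetryPreserving cs (piWord_mem_heckeGroupAlgebra cs l₂))
    (funext fun p => by rw [admissibleCoords_piWord cs h₁, admissibleCoords_piWord cs h₂, h])

theorem demazureAct_eq_of_wordProd_eq {l₁ l₂ : List B} (h₁ : cs.IsReduced l₁)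
    (h₂ : cs.IsReduced l₂) (h : π l₁ = π l₂) (u : W) :
    cs.demazureAct u l₁ = cs.demazureAct u l₂ := by
  have := congrArg (· (single u 1)) (piWord_eq_of_wordProd_eq cs h₁ h₂ h)
  simpa [piWord_single, single_inj] using this

end WordOperators

end HGA

namespace CoxeterSystem

variable {B : Type*} {W : Type*} [Group W] {M : CoxeterMatrix B} (cs : CoxeterSystem M W)

local prefix:100 "s" => cs.simple
local prefix:100 "π" => cs.wordProd
local prefix:100 "ℓ" => cs.length

section DemazureProduct

def reducedWord (w : W) : List B := (cs.exists_isReduced w).choose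

theorem isReduced_reducedWord (w : W) : cs.IsReduced (cs.reducedWord w) :=
  (cs.exists_isReduced w).choose_spec.1

theorem wordProd_reducedWord (w : W) : π (cs.reducedWord w) = w :=
  (cs.exists_isReduced w).choose_spec.2.symm

def demazureProd (u v : W) : W := cs.demazureAct u (cs.reducedWord v)

theorem demazureProd_wordProd {ω : List B} (hω : cs.IsReduced ω) (u : W) :
    cs.demazureProd u (π ω) = cs.demazureAct u ω :=
  HGA.demazureAct_eq_of_wordProd_eq cs (cs.isReduced_reducedWord _) hω
    (cs.wordProd_reducedWord _) u

theorem demazureProd_eq_mul_of_length_add {u v : W} (h : ℓ (u * v) = ℓ u + ℓ v) :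
    cs.demazureProd u v = u * v := by
  rw [demazureProd, cs.demazureAct_eq_mul_of_length_add (cs.isReduced_reducedWord v)
    (by rwa [wordProd_reducedWord]), wordProd_reducedWord]

theorem demazureProd_one (u : W) : cs.demazureProd u 1 = u := by
  rw [cs.demazureProd_eq_mul_of_length_add (u := u) (v := 1) (by simp), mul_one]

theorem one_demazureProd (v : W) : cs.demazureProd 1 v = v := by
  rw [cs.demazureProd_eq_mul_of_length_add (u := 1) (v := v) (by simp), one_mul]

theorem demazureProd_simple (u : W) (i : B) : cs.demazureProd u (s i) = cs.demazureStep u i := by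
  simpa using cs.demazureProd_wordProd (ω := [i]) (by simp [IsReduced]) u

theorem demazureStep_demazureProd (u v : W) (i : B) :
    cs.demazureStep (cs.demazureProd u v) i = cs.demazureProd u (cs.demazureStep v i) := by
  by_cases hv : cs.IsRightDescent v i
  · obtain ⟨ω, hω, hvω⟩ := cs.exists_isReduced (v * s i)
    have hred : cs.IsReduced (ω ++ [i]) := (cs.isReduced_concat_iff ω i).2 ⟨hω, by
      rwa [← hvω, ← isRightDescent_iff_not_isRightDescent_mul]⟩
    have hv' : v = π (ω ++ [i]) := by
      rw [wordProd_append, wordProd_singleton, ← hvω, simple_mul_simple_cancel_right]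
    rw [demazureStep_of_isRightDescent hv, hv', cs.demazureProd_wordProd hred,
      demazureAct_concat, demazureStep_of_isRightDescent (cs.isRightDescent_demazureStep _ _)]
  · have hred : cs.IsReduced (cs.reducedWord v ++ [i]) :=
      (cs.isReduced_concat_iff _ i).2 ⟨cs.isReduced_reducedWord v, by rwa [wordProd_reducedWord]⟩
    have hv' : v * s i = π (cs.reducedWord v ++ [i]) := by
      rw [wordProd_append, wordProd_singleton, wordProd_reducedWord]
    rw [demazureStep_of_not_isRightDescent hv, hv', cs.demazureProd_wordProd hred,
      demazureAct_concat, demazureProd]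

theorem demazureAct_eq_demazureProd (u : W) (ω : List B) :
    cs.demazureAct u ω = cs.demazureProd u (cs.demazureAct 1 ω) := by
  induction ω using List.reverseRecOn with
  | nil => simp [demazureProd_one]
  | append_singleton ω i ih =>
    rw [demazureAct_concat, demazureAct_concat, ih, demazureStep_demazureProd]

theorem demazureProd_assoc (u v w : W) :
    cs.demazureProd (cs.demazureProd u v) w = cs.demazureProd u (cs.demazureProd v w) := by
  rw [demazureProd, demazureProd, ← demazureAct_append, demazureAct_eq_demazureProd,
    demazureAct_append, cs.demazureAct_one (cs.isReduced_reducedWord v), wordProd_reducedWord]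
  rfl

theorem simple_demazureProd (i : B) (z : W) :
    cs.demazureProd (s i) z = if cs.IsLeftDescent z i then z else s i * z := by
  split_ifs with hz
  · have hadd : ℓ (s i * (s i * z)) = ℓ (s i) + ℓ (s i * z) := by
      rw [simple_mul_simple_cancel_left, length_simple, ← (cs.isLeftDescent_iff).1 hz, add_comm]
    have hidem : cs.demazureProd (s i) (s i) = s i := by
      rw [demazureProd_simple, demazureStep_of_isRightDescent]
      simp [IsRightDescent]
    calc cs.demazureProd (s i) z = cs.demazureProd (s i) (cs.demazureProd (s i) (s i * z)) := by
          rw [cs.demazureProd_eq_mul_of_length_add hadd, simple_mul_simple_cancel_left]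
      _ = z := by
          rw [← demazureProd_assoc, hidem, cs.demazureProd_eq_mul_of_length_add hadd,
            simple_mul_simple_cancel_left]
  · exact cs.demazureProd_eq_mul_of_length_add (by
      rw [(cs.not_isLeftDescent_iff).1 hz, length_simple, add_comm])

theorem inv_simple_demazureProd (i : B) (y : W) :
    (cs.demazureProd (s i) y)⁻¹ = cs.demazureStep y⁻¹ i := by
  rw [simple_demazureProd, demazureStep, isRightDescent_inv_iff]
  split_ifs <;> simp

theorem demazureProd_inv (u w : W) :
    (cs.demazureProd u w)⁻¹ = cs.demazureProd w⁻¹ u⁻¹ := by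
  induction h : ℓ u using Nat.strong_induction_on generalizing u with
  | _ n ih =>
    by_cases hu : u = 1
    · rw [hu, one_demazureProd, inv_one, demazureProd_one]
    obtain ⟨j, hj⟩ := cs.exists_leftDescent_of_ne_one hu
    rw [isLeftDescent_iff] at hj
    have hadd : ℓ (s j * (s j * u)) = ℓ (s j) + ℓ (s j * u) := by
      rw [simple_mul_simple_cancel_left, length_simple]
      omega
    have hnd : ¬ cs.IsRightDescent (s j * u)⁻¹ j := by
      rw [isRightDescent_inv_iff, not_isLeftDescent_iff, simple_mul_simple_cancel_left]
      omega
    calc (cs.demazureProd u w)⁻¹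
        = (cs.demazureProd (s j) (cs.demazureProd (s j * u) w))⁻¹ := by
          rw [← demazureProd_assoc, cs.demazureProd_eq_mul_of_length_add hadd,
            simple_mul_simple_cancel_left]
      _ = cs.demazureProd w⁻¹ (cs.demazureStep (s j * u)⁻¹ j) := by
          rw [inv_simple_demazureProd, ih _ (by omega) _ rfl, demazureStep_demazureProd]
      _ = cs.demazureProd w⁻¹ u⁻¹ := by
          rw [demazureStep_of_not_isRightDescent hnd, mul_inv_rev, inv_simple,
            simple_mul_simple_cancel_right]

theorem exists_wordProd_of_demazureProd_eq_self {x w : W} (h : cs.demazureProd x w = w) :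
    ∃ ω : List B, (∀ i ∈ ω, cs.IsLeftDescent w i) ∧ x = π ω := by
  have hself : cs.demazureAct w⁻¹ (cs.reducedWord x⁻¹) = w⁻¹ := by
    rw [← demazureProd, ← demazureProd_inv, h]
  refine ⟨(cs.reducedWord x⁻¹).reverse, fun i hi => ?_, by simp [wordProd_reducedWord]⟩
  exact cs.isRightDescent_inv_iff.1
    (cs.isRightDescent_of_demazureAct_eq_self hself i (List.mem_reverse.1 hi))

end DemazureProduct

end CoxeterSystem

theorem linearIndependent_of_triangular {ι K : Type*} [Fintype ι] [CommRing K] [NoZeroDivisors K]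
    (v : ι → ι → K) (f : ι → ℕ) (hdiag : ∀ i, v i i ≠ 0)
    (htri : ∀ i j, i ≠ j → v i j ≠ 0 → f i < f j) : LinearIndependent K v := by
  rw [Fintype.linearIndependent_iff]
  intro c hc
  suffices ∀ n i, f i = n → c i = 0 from fun i => this _ i rfl
  intro n
  induction n using Nat.strong_induction_on with
  | _ n ih =>
    rintro j rfl
    have hj := congrFun hc j
    rw [Finset.sum_apply, Finset.sum_eq_single j (fun i _ hij => ?_) (by simp)] at hj
    · simpa [hdiag j] using hj
    · by_cases hv : v i j = 0
      · simp [hv]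
      · simp [ih _ (htri i j hij hv) i rfl]

namespace HGA

open CoxeterSystem MonoidAlgebra

variable {B : Type*} {W : Type*} [Group W] {M : CoxeterMatrix B}

section Basis

variable (cs : CoxeterSystem M W)

local prefix:100 "ℓ" => cs.length

/-- The operator `x ↦ π_{w'} (x w)` attached to an admissible pair `(w, w')`. -/
def basisOp (p : AdmissiblePair cs) : Module.End ℂ (MonoidAlgebra ℂ W) :=
  piWord cs (cs.reducedWord p.1.2) * rOp p.1.1

theorem basisOp_mem_heckeGroupAlgebra (p : AdmissiblePair cs) :
    basisOp cs p ∈ heckeGroupAlgebra cs :=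
  mul_mem (piWord_mem_heckeGroupAlgebra cs _) (rOp_mem_heckeGroupAlgebra cs _)

theorem admissibleCoords_basisOp (p q : AdmissiblePair cs) :
    admissibleCoords cs (basisOp cs p) q =
      if cs.demazureProd (q.1.1⁻¹ * p.1.1) p.1.2 = q.1.2 then 1 else 0 := by
  rw [admissibleCoords_apply, basisOp, Module.End.mul_apply, rOp_single, piWord_single,
    coeff_single, Finsupp.single_apply]
  rfl

/-- Unitriangularity of the admissible coordinates of the `basisOp`. With `x = w₂⁻¹ w₁`, we have
`x ⋆ w₁' = y w₁'` with lengths adding, so `ℓ w₂' ≤ ℓ w₁'` forces `x ⋆ w₁' = w₁'`; then `x` lies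
in the parabolic subgroup of the left descents of `w₁'`, whose coset `w₂ W_P` has only one
element without right descents in `P`. -/
theorem length_lt_of_demazureProd_eq {p q : AdmissiblePair cs} (hpq : p ≠ q)
    (h : cs.demazureProd (q.1.1⁻¹ * p.1.1) p.1.2 = q.1.2) : ℓ p.1.2 < ℓ q.1.2 := by
  obtain ⟨⟨w₁, w₁'⟩, hp⟩ := p
  obtain ⟨⟨w₂, w₂'⟩, hq⟩ := q
  dsimp only at h ⊢
  by_contra hlt
  obtain ⟨y, hy, hadd⟩ :=
    cs.exists_demazureAct_eq_mul_wordProd (cs.isReduced_reducedWord w₁') (w₂⁻¹ * w₁)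
  rw [wordProd_reducedWord, ← demazureProd, h] at hy
  rw [wordProd_reducedWord, ← hy] at hadd
  have hy1 : y = 1 := cs.length_eq_zero_iff.1 (by omega)
  rw [hy1, one_mul] at hy
  subst hy
  obtain ⟨ω, hω, hx⟩ := cs.exists_wordProd_of_demazureProd_eq_self h
  have hw : w₂ = w₁ := cs.eq_of_mem_parabolicCoset (cs.self_mem_parabolicCoset)
    ⟨ω, hω, by rw [← hx, mul_inv_cancel_left]⟩ (fun i hi hd => hq i ⟨hd, hi⟩)
    (fun i hi hd => hp i ⟨hd, hi⟩)
  subst hw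
  exact hpq rfl

theorem linearIndependent_admissibleCoords_basisOp [Finite W] :
    LinearIndependent ℂ (admissibleCoords cs ∘ basisOp cs) := by
  have := Fintype.ofFinite (AdmissiblePair cs)
  refine linearIndependent_of_triangular _ (fun p => ℓ p.1.2) (fun p => ?_) fun p q hpq h => ?_
  · simp [admissibleCoords_basisOp, one_demazureProd]
  · refine length_lt_of_demazureProd_eq cs hpq ?_
    by_contra hne
    simp [admissibleCoords_basisOp, hne] at h

theorem span_basisOp [Finite W] :
    Submodule.span ℂ (Set.range (basisOp cs)) = Subalgebra.toSubmodule (heckeGroupAlgebra cs) := by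
  have := Fintype.ofFinite (AdmissiblePair cs)
  have hle : Submodule.span ℂ (Set.range (basisOp cs)) ≤
      Subalgebra.toSubmodule (heckeGroupAlgebra cs) :=
    Submodule.span_le.2 (Set.range_subset_iff.2 (basisOp_mem_heckeGroupAlgebra cs))
  refine le_antisymm hle fun f hf => ?_
  have htop : (Submodule.span ℂ (Set.range (basisOp cs))).map (admissibleCoords cs) = ⊤ := by
    rw [Submodule.map_span, ← Set.range_comp]
    exact (linearIndependent_admissibleCoords_basisOp cs).span_eq_top_of_card_eq_finrank'
      (by simp)
  obtain ⟨g, hg, hgf⟩ := (Submodule.mem_map (f := admissibleCoords cs)).1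
    (htop ▸ Submodule.mem_top (x := admissibleCoords cs f))
  have hpres := heckeGroupAlgebra_le_antisymmetryPreserving cs
  rwa [← eq_of_admissibleCoords_eq cs (hpres (hle hg)) (hpres hf) hgf]

end Basis

/-- (a) for each `w'`, the operator `π_{i_k} ∘ ⋯ ∘ π_{i_1}` associated to a
reduced word `(i₁, …, i_k)` of `w'` does not depend on the chosen reduced word; (b) writing
`P w'` for the common value, the family of operators `x ↦ P w' (x · w)`, indexed by the
pairs `(w, w')` with `D_R(w) ∩ D_L(w') = ∅`, is a basis of the ℂ-vector space `H(W)`. -/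
theorem piWord_reduced_well_defined_and_basis (cs : CoxeterSystem M W) [Finite W] :
    (∀ l₁ l₂ : List B, cs.IsReduced l₁ → cs.IsReduced l₂ →
      cs.wordProd l₁ = cs.wordProd l₂ → piWord cs l₁ = piWord cs l₂) ∧
    (∀ P : W → Module.End ℂ (MonoidAlgebra ℂ W),
      (∀ l : List B, cs.IsReduced l → P (cs.wordProd l) = piWord cs l) →
      LinearIndependent ℂ
        (fun p : {p : W × W // ∀ i : B, ¬ (cs.IsRightDescent p.1 i ∧ cs.IsLeftDescent p.2 i)} =>
          P p.1.2 * rOp p.1.1) ∧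
      Submodule.span ℂ
        (Set.range
          (fun p : {p : W × W // ∀ i : B, ¬ (cs.IsRightDescent p.1 i ∧ cs.IsLeftDescent p.2 i)} =>
            P p.1.2 * rOp p.1.1)) =
        Subalgebra.toSubmodule (heckeGroupAlgebra cs)) := by
  refine ⟨fun l₁ l₂ h₁ h₂ h => piWord_eq_of_wordProd_eq cs h₁ h₂ h, fun P hP => ?_⟩
  have hbasis : (fun p : AdmissiblePair cs => P p.1.2 * rOp p.1.1) = basisOp cs := by
    funext p
    rw [basisOp, ← hP _ (cs.isReduced_reducedWord _), CoxeterSystem.wordProd_reducedWord]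
  rw [hbasis]
  exact ⟨(linearIndependent_admissibleCoords_basisOp cs).of_comp, span_basisOp cs⟩

end HGA
end
end

section
/- Assume W is finite. For every subset I ⊆ B, the subspace P_I is stable under the Hecke group algebra: for every f ∈ H(W) one has f(P_I) ⊆ P_I; in other words, each P_I is a module over H(W). -/
open scoped Classical

noncomputable section

namespace HGA

variable {B : Type*} {W : Type*} [Group W] {M : CoxeterMatrix B}

/-- `P_I` : the subspace of vectors of `ℂ[W]` that are antisymmetric on the left
for every `i ∈ I`, i.e. `s_i · v = −v` (left multiplication in `ℂ[W]`) for all `i ∈ I`. -/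
def PSub (cs : CoxeterSystem M W) (I : Set B) : Submodule ℂ (MonoidAlgebra ℂ W) where
  carrier := {v | ∀ i ∈ I, MonoidAlgebra.single (cs.simple i) (1 : ℂ) * v = -v}
  add_mem' := by
    intro a b ha hb i hi
    rw [mul_add, ha i hi, hb i hi, neg_add]
  zero_mem' := by
    intro i hi
    simp
  smul_mem' := by
    intro c v hv i hi
    rw [Algebra.mul_smul_comm, hv i hi, smul_neg]

/-!
The vectors `v` with `s_i · v = -v` form the image of `1 - s_i·`, so an operator `f` preserves
them as soon as `(1 + s_i·) f (1 - s_i·) = 0`. The generators `σ_j`, `π_j` are linearisations of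
maps `g : W → W` (`w ↦ w s_j` and `w ↦ max (w, w s_j)`), and this identity holds once, for each
`w`, either `g (s_i w) = s_i g w` or `g (s_i w) = g w`. For `σ_j` the first always holds. For
`π_j` the only delicate case is when `j` is a right descent of exactly one of `w`, `s_i w`; then
`s_i w = w s_j`, by the exchange property (a simple reflection that is a left descent of `w` occurs
in the left inversion sequence of every word for `w`), which comes from Tits' action of `W` on
`W × ZMod 2` counting occurrences of reflections in inversion sequences mod 2.
-/

section Stabilizer

open MonoidAlgebra

def stabilizerSubalgebra {R N : Type*} [CommSemiring R] [AddCommMonoid N] [Module R N]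
    (p : Submodule R N) : Subalgebra R (Module.End R N) where
  carrier := {f | ∀ v ∈ p, f v ∈ p}
  mul_mem' hf hg v hv := hf _ (hg v hv)
  add_mem' hf hg v hv := p.add_mem (hf v hv) (hg v hv)
  algebraMap_mem' c _ hv := p.smul_mem c hv

theorem apply_eq_neg_of_mul_mul_eq_zero {R N : Type*} [CommRing R] [Invertible (2 : R)]
    [AddCommGroup N] [Module R N] {L f : Module.End R N} (h : (L + 1) * f * (1 - L) = 0)
    {v : N} (hv : L v = -v) : L (f v) = -f v := by
  have hv' : (1 - L) ((⅟2 : R) • v) = v := by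
    rw [map_smul, LinearMap.sub_apply, hv, Module.End.one_apply, sub_neg_eq_add, ← two_smul R v,
      smul_smul, invOf_mul_self, one_smul]
  rw [eq_neg_iff_add_eq_zero, ← hv']
  simpa using LinearMap.congr_fun h ((⅟2 : R) • v)

/-- `(1 + x·) ∘ g ∘ (1 - x·)` kills each basis vector `w`: it maps it either to
`(1 + x·) (1 - x·) (g w) = 0` or to `(1 + x·) 0`. -/
theorem single_mul_mapDomain_eq_neg {k G : Type*} [CommRing k] [Invertible (2 : k)] [Monoid G]
    {x : G} (hx : x * x = 1) {g : G → G} (hg : ∀ w, g (x * w) = x * g w ∨ g (x * w) = g w)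
    {v : k[G]} (hv : single x 1 * v = -v) :
    single x 1 * mapDomainLinearMap k k g v = -mapDomainLinearMap k k g v := by
  refine apply_eq_neg_of_mul_mul_eq_zero (L := LinearMap.mulLeft k (single x (1 : k))) ?_ hv
  refine lhom_ext' fun w => LinearMap.ext_ring ?_
  rcases hg w with h | h
  · simp [mul_sub, single_mul_single, mapDomainLinearMap_single, h, ← mul_assoc, hx, add_comm]
  · simp [h]

end Stabilizer

section Coxeter

open CoxeterSystem List

variable (cs : CoxeterSystem M W)

local prefix:100 "s" => cs.simple
local prefix:100 "π" => cs.wordProd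
local prefix:100 "ℓ" => cs.length
local prefix:100 "ris" => cs.rightInvSeq
local prefix:100 "lis" => cs.leftInvSeq

/-- Tits' action of `s i` on `W × ZMod 2`: on a reflection `t`, the second coordinate counts
mod 2 how often `t` occurs in a right inversion sequence (`parityWord_apply`). -/
def parityFlip (i : B) : Function.End (W × ZMod 2) := fun x =>
  (s i * x.1 * s i, x.2 + if x.1 = s i then 1 else 0)

def parityWord (ω : List B) : Function.End (W × ZMod 2) := (ω.map (parityFlip cs)).prod

theorem parityWord_apply (ω : List B) (t : W) (e : ZMod 2) :
    parityWord cs ω (t, e) = (π ω * t * (π ω)⁻¹, e + (ris ω).count t) := by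
  induction ω with
  | nil => simp [parityWord, rightInvSeq, Function.End.one_def]
  | cons i ω ih =>
    have hconj : π ω * t * (π ω)⁻¹ = s i ↔ (π ω)⁻¹ * s i * π ω = t := by
      constructor <;> intro h <;> rw [← h] <;> group
    show parityFlip cs i (parityWord cs ω (t, e)) = _
    rw [ih, parityFlip, rightInvSeq, count_cons, wordProd_cons]
    simp only [beq_iff_eq, ← hconj, Nat.cast_add, Nat.cast_ite, Nat.cast_one, Nat.cast_zero,
      mul_inv_rev, inv_simple, add_assoc, Prod.mk.injEq, and_true]
    group

theorem rightInvSeq_alternatingWord (i j : B) (m : ℕ) :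
    ris (alternatingWord i j m) = ((range m).map fun c => s j * (s i * s j) ^ c).reverse := by
  induction m generalizing i j with
  | zero => simp [alternatingWord]
  | succ m ih =>
    rw [alternatingWord_succ, rightInvSeq_concat, ih, range_succ_eq_map]
    simp [map_reverse, mul_assoc, pow_succ', mul_pow_mul]

theorem wordProd_alternatingWord_two_mul (i j : B) (m : ℕ) :
    π (alternatingWord i j (2 * m)) = (s i * s j) ^ m := by
  simp [prod_alternatingWord_eq_mul_pow]

theorem parityWord_alternatingWord_two_mul (i j : B) (m : ℕ) :
    parityWord cs (alternatingWord i j (2 * m)) = (parityFlip cs i * parityFlip cs j) ^ m := by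
  induction m with
  | zero => rfl
  | succ m ih =>
    rw [show 2 * (m + 1) = 2 * m + 1 + 1 by ring, alternatingWord_succ, alternatingWord_succ,
      pow_succ, ← ih]
    simp [parityWord]

theorem even_count_rightInvSeq_alternatingWord (i j : B) (t : W) :
    Even ((ris (alternatingWord i j (2 * M i j))).count t) := by
  have hperiod : ∀ c, s j * (s i * s j) ^ (M i j + c) = s j * (s i * s j) ^ c := by
    simp [pow_add, cs.simple_mul_simple_pow]
  rw [rightInvSeq_alternatingWord, count_reverse, two_mul, range_add, map_append, map_map,
    count_append]
  simp only [Function.comp_def, hperiod]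
  exact ⟨_, rfl⟩

theorem isLiftable_parityFlip : M.IsLiftable (parityFlip cs) := by
  intro i j
  rw [← parityWord_alternatingWord_two_mul]
  funext ⟨t, e⟩
  rw [parityWord_apply, wordProd_alternatingWord_two_mul, cs.simple_mul_simple_pow,
    (even_count_rightInvSeq_alternatingWord cs i j t).natCast_zmod_two]
  simp [Function.End.one_def]

def parityAction : W →* Function.End (W × ZMod 2) :=
  cs.lift ⟨parityFlip cs, isLiftable_parityFlip cs⟩

theorem parityAction_wordProd (ω : List B) : parityAction cs (π ω) = parityWord cs ω := by
  induction ω with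
  | nil => simp [parityWord]
  | cons i ω ih => rw [wordProd_cons, map_mul, ih, parityAction, lift_apply_simple]; rfl

theorem natCast_count_rightInvSeq_eq {ω ω' : List B} (h : π ω = π ω') (t : W) :
    ((ris ω).count t : ZMod 2) = (ris ω').count t := by
  have := congrArg (fun x => (x (t, 0)).2) (congrArg (parityAction cs) h)
  simpa [parityAction_wordProd, parityWord_apply] using this

theorem simple_mem_rightInvSeq {ω : List B} {j : B} (h : cs.IsRightDescent (π ω) j) :
    s j ∈ ris ω := by
  obtain ⟨ωu, hred, hu⟩ := cs.exists_isReduced (π ω * s j)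
  have hnot : s j ∉ ris ωu := fun hmem => by
    have := (cs.isRightInversion_of_mem_rightInvSeq hred hmem).2
    rw [← hu, simple_mul_simple_cancel_right] at this
    exact lt_asymm h this
  have hcount : ((ris (ωu.concat j)).count (s j) : ZMod 2) = 1 := by
    have hconj : s j ∉ (ris ωu).map (MulAut.conj (s j)) := by
      simpa [mul_eq_one_iff_inv_eq, eq_comm] using hnot
    rw [rightInvSeq_concat, concat_eq_append, count_append, count_eq_zero.mpr hconj]
    simp
  have hπ : π (ωu.concat j) = π ω := by
    rw [wordProd_concat, ← hu, simple_mul_simple_cancel_right]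
  rw [natCast_count_rightInvSeq_eq cs hπ] at hcount
  refine count_pos_iff.mp (Nat.pos_of_ne_zero fun h0 => ?_)
  simp [h0] at hcount

theorem simple_mem_leftInvSeq {ω : List B} {i : B} (h : cs.IsLeftDescent (π ω) i) :
    s i ∈ lis ω := by
  rw [← mem_reverse, ← rightInvSeq_reverse]
  apply simple_mem_rightInvSeq
  rwa [wordProd_reverse, isRightDescent_inv_iff]

theorem simple_mul_eq_mul_simple_s8 {w : W} {i j : B} (h₁ : cs.IsRightDescent w j)
    (h₂ : ¬cs.IsRightDescent (s i * w) j) : s i * w = w * s j := by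
  have hw : ℓ (w * s j) + 1 = ℓ w := cs.isRightDescent_iff.mp h₁
  have hiw : ℓ (s i * w * s j) = ℓ (s i * w) + 1 := cs.not_isRightDescent_iff.mp h₂
  have hi : cs.IsLeftDescent w i := by
    -- otherwise `ℓ (s i * w * s j) = ℓ w + 2`, while it is at most `ℓ (w * s j) + 1 = ℓ w`
    by_contra hi
    have := cs.not_isLeftDescent_iff.mp hi
    rcases cs.length_simple_mul (w * s j) i with h | h <;> rw [← mul_assoc] at h <;> omega
  have hiw' : ℓ (s i * w) + 1 = ℓ w := cs.isLeftDescent_iff.mp hi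
  obtain ⟨ω, hred, hω⟩ := cs.exists_isReduced (w * s j)
  have hwω : π (ω.concat j) = w := by
    rw [wordProd_concat, ← hω, simple_mul_simple_cancel_right]
  have hmem := simple_mem_leftInvSeq cs (hwω ▸ hi)
  rw [leftInvSeq_concat, concat_eq_append, mem_append, mem_singleton, ← hω] at hmem
  rcases hmem with hmem | hsi
  · have := (cs.isLeftInversion_of_mem_leftInvSeq hred hmem).2
    rw [← hω, ← mul_assoc] at this
    omega
  · rw [hsi]
    group

def piMap (j : B) (w : W) : W := if cs.IsRightDescent w j then w else w * s j

theorem piMap_simple_mul (i j : B) (w : W) :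
    piMap cs j (s i * w) = s i * piMap cs j w ∨ piMap cs j (s i * w) = piMap cs j w := by
  unfold piMap
  by_cases hw : cs.IsRightDescent w j <;> by_cases hiw : cs.IsRightDescent (s i * w) j
  · simp [hw, hiw]
  · right
    simp only [hw, hiw, if_true, if_false]
    rw [simple_mul_eq_mul_simple_s8 cs hw hiw, simple_mul_simple_cancel_right]
  · right
    have := simple_mul_eq_mul_simple_s8 cs hiw (by rwa [simple_mul_simple_cancel_left])
    rw [simple_mul_simple_cancel_left] at this
    simp only [hw, hiw, if_true, if_false]
    rw [← cs.simple_mul_simple_cancel_right (w := s i * w) j, ← this]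
  · simp [hw, hiw, mul_assoc]

end Coxeter

section HeckeGroupAlgebra

open MonoidAlgebra

variable (cs : CoxeterSystem M W)

theorem sigmaOp_eq_mapDomainLinearMap (i : B) :
    sigmaOp cs i = mapDomainLinearMap ℂ ℂ (· * cs.simple i) :=
  lhom_ext' fun w => LinearMap.ext_ring (by simp [sigmaOp])

theorem piOp_eq_mapDomainLinearMap (i : B) :
    piOp cs i = mapDomainLinearMap ℂ ℂ (piMap cs i) :=
  lhom_ext' fun w => LinearMap.ext_ring <| by
    by_cases h : cs.IsRightDescent w i <;> simp [piOp, piMap, h]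

theorem mapDomainLinearMap_mem_stabilizerSubalgebra_PSub {g : W → W}
    (hg : ∀ i w, g (cs.simple i * w) = cs.simple i * g w ∨ g (cs.simple i * w) = g w)
    (I : Set B) : mapDomainLinearMap ℂ ℂ g ∈ stabilizerSubalgebra (PSub cs I) :=
  fun _ hv i hi => single_mul_mapDomain_eq_neg (cs.simple_mul_simple_self i) (hg i) (hv i hi)

end HeckeGroupAlgebra

theorem heckeGroupAlgebra_stabilizes_PSub_general (cs : CoxeterSystem M W) (I : Set B)
    (f : Module.End ℂ (MonoidAlgebra ℂ W)) (hf : f ∈ heckeGroupAlgebra cs) :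
    ∀ v ∈ PSub cs I, f v ∈ PSub cs I := by
  suffices heckeGroupAlgebra cs ≤ stabilizerSubalgebra (PSub cs I) from this hf
  refine Algebra.adjoin_le ?_
  rintro _ (⟨j, rfl⟩ | ⟨j, rfl⟩)
  · rw [sigmaOp_eq_mapDomainLinearMap]
    exact mapDomainLinearMap_mem_stabilizerSubalgebra_PSub cs (fun _ _ => .inl (mul_assoc ..)) I
  · rw [piOp_eq_mapDomainLinearMap]
    exact mapDomainLinearMap_mem_stabilizerSubalgebra_PSub cs (fun i => piMap_simple_mul cs i j) I

/-- for `W` finite, each `P_I` is stable under the Hecke group algebra. -/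
theorem heckeGroupAlgebra_stabilizes_PSub (cs : CoxeterSystem M W) [Finite W] (I : Set B)
    (f : Module.End ℂ (MonoidAlgebra ℂ W)) (hf : f ∈ heckeGroupAlgebra cs) :
    ∀ v ∈ PSub cs I, f v ∈ PSub cs I :=
  heckeGroupAlgebra_stabilizes_PSub_general cs I f hf

end HGA
end
end

section
/- The operators f_0, f_1, …, f_{n−1} act transitively on S_n: for all permutations u, v ∈ S_n there exists a finite composition g of maps taken from {f_0, f_1, …, f_{n−1}} such that g(u) = v. Equivalently, the submonoid of self-maps of S_n generated by {f_0, f_1, …, f_{n−1}} has a single orbit on S_n. -/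
/-!
Write `Reaches n u v` when some composite of the `f_i` sends `u` to `v`. This relation is
equivariant under rotating the positions (`w ↦ w * addRight c`), and complementing the values
(`w ↦ rev * w`) reverses it.

The non-cyclic operators alone sort every permutation into the decreasing one `rev`, because
each effective step strictly decreases `∑ i, i * w i`. Complementing values, `1` reaches every
permutation.

Conversely, every permutation reaches `1`. The rotations reach one another (the entry `n - 1`
travels once around the circle), so by equivariance it is enough to reach `1` up to a rotation.
Grow an initial segment `0, 1, …, k - 1` on which `w` is the identity: the entry at position `k`
exceeds every entry before it, so it can travel to the front; rotating the positions back
restores the segment and moves the entry `k` one step to the left, until it joins the segment.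
-/

open scoped Classical

noncomputable section

namespace AffineSorting

/-- The circular antisorting operators on `S_n` (permutations of `Fin n`,
i.e. of `{1, …, n}` written 0-indexed).  For `i : Fin n`, `bubble n i`
exchanges the entries of `w` in the (cyclically consecutive) positions `i` and
`i + 1` if the entry at position `i` is smaller than the entry at position
`i + 1`, and fixes `w` otherwise.  For `(i : ℕ) + 1 < n` this is the operator
`f_{i+1}` (1-indexed positions `i+1, i+2`), and for `i = n - 1` (so that `i + 1`
wraps around to `0`) this is the affine operator `f_0`, which exchanges the
entries in positions `1` and `n` (1-indexed) when `w(n) < w(1)`.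
Hence `{bubble n i : i : Fin n} = {f_0, f_1, …, f_{n-1}}`. -/
def bubble (n : ℕ) [NeZero n] (i : Fin n) : Function.End (Equiv.Perm (Fin n)) :=
  fun w => if w i < w (i + 1) then w * Equiv.swap i (i + 1) else w

open Equiv Fin Relation

def Reaches (n : ℕ) [NeZero n] : Perm (Fin n) → Perm (Fin n) → Prop :=
  ReflTransGen fun u v => ∃ i, bubble n i u = v

section

variable {n : ℕ} [NeZero n]

theorem exists_mem_closure_of_reaches {u v : Perm (Fin n)} (h : Reaches n u v) :
    ∃ g ∈ Submonoid.closure (Set.range (bubble n)), g u = v := by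
  induction h with
  | refl => exact ⟨1, Submonoid.one_mem _, rfl⟩
  | tail _ hstep ih =>
    obtain ⟨g, hg, rfl⟩ := ih
    obtain ⟨i, rfl⟩ := hstep
    exact ⟨bubble n i * g, Submonoid.mul_mem _ (Submonoid.subset_closure ⟨i, rfl⟩) hg, rfl⟩

theorem bubble_apply_of_lt {w : Perm (Fin n)} {i : Fin n} (h : w i < w (i + 1)) :
    bubble n i w = w * swap i (i + 1) :=
  if_pos h

theorem bubble_apply_of_not_lt {w : Perm (Fin n)} {i : Fin n} (h : ¬ w i < w (i + 1)) :
    bubble n i w = w :=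
  if_neg h

theorem reaches_mul_swap {w : Perm (Fin n)} {i : Fin n} (h : w i < w (i + 1)) :
    Reaches n w (w * swap i (i + 1)) :=
  ReflTransGen.single ⟨i, bubble_apply_of_lt h⟩

theorem bubble_mul_addRight (i c : Fin n) (w : Perm (Fin n)) :
    bubble n i (w * Equiv.addRight c) = bubble n (i + c) w * Equiv.addRight c := by
  simp only [bubble, Perm.mul_apply, Equiv.coe_addRight, add_right_comm i 1 c]
  split_ifs
  · rw [mul_assoc, mul_swap_eq_swap_mul, ← mul_assoc]
    simp only [Equiv.coe_addRight, add_right_comm i 1 c]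
  · rfl

theorem Reaches.mul_addRight {u v : Perm (Fin n)} (h : Reaches n u v) (c : Fin n) :
    Reaches n (u * Equiv.addRight c) (v * Equiv.addRight c) :=
  ReflTransGen.lift (· * Equiv.addRight c)
    (fun _ _ ⟨i, hi⟩ => ⟨i - c, by rw [bubble_mul_addRight, sub_add_cancel, hi]⟩) _ _ h

theorem reaches_revPerm_mul_bubble (i : Fin n) (w : Perm (Fin n)) :
    Reaches n (revPerm * bubble n i w) (revPerm * w) := by
  by_cases h : w i < w (i + 1)
  · rw [bubble_apply_of_lt h]
    refine ReflTransGen.single ⟨i, ?_⟩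
    rw [bubble_apply_of_lt (by simpa [swap_apply_left, swap_apply_right] using h), mul_assoc,
      mul_assoc, swap_mul_self, mul_one]
  · rw [bubble_apply_of_not_lt h]
    exact ReflTransGen.refl

theorem Reaches.revPerm_mul {u v : Perm (Fin n)} (h : Reaches n u v) :
    Reaches n (revPerm * v) (revPerm * u) := by
  induction h with
  | refl => exact ReflTransGen.refl
  | tail _ hstep ih =>
    obtain ⟨i, rfl⟩ := hstep
    exact (reaches_revPerm_mul_bubble i _).trans ih

end

section

variable {n : ℕ}

def weight (w : Perm (Fin n)) : ℕ := ∑ i : Fin n, (i : ℕ) * (w i : ℕ)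

theorem weight_mul_swap_lt {w : Perm (Fin n)} {a b : Fin n} (hab : a < b) (h : w a < w b) :
    weight (w * swap a b) < weight w := by
  have hswap : weight (w * swap a b) = ∑ i : Fin n, (swap a b i : ℕ) * (w i : ℕ) := by
    rw [weight, ← Equiv.sum_comp (swap a b)]
    simp
  have hdiff : (weight w : ℤ) - weight (w * swap a b) = ((b : ℤ) - a) * ((w b : ℤ) - w a) := by
    rw [hswap, weight]
    push_cast
    rw [← Finset.sum_sub_distrib, Fintype.sum_eq_add a b hab.ne fun x hx => by
      rw [swap_apply_of_ne_of_ne hx.1 hx.2, sub_self]]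
    simp only [swap_apply_left, swap_apply_right]
    ring
  have hpos : 0 < ((b : ℤ) - a) * ((w b : ℤ) - w a) :=
    mul_pos (sub_pos.mpr (by exact_mod_cast hab)) (sub_pos.mpr (by exact_mod_cast h))
  omega

end

section

variable {m : ℕ}

theorem cycleRange_succ_eq_mul_swap (i : Fin m) :
    cycleRange i.succ = cycleRange i.castSucc * swap i.castSucc i.succ := by
  ext j
  rw [Perm.mul_apply]
  rcases lt_trichotomy j i.castSucc with hj | rfl | hj
  · rw [swap_apply_of_ne_of_ne hj.ne (hj.trans castSucc_lt_succ).ne, cycleRange_of_lt hj,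
      cycleRange_of_lt (hj.trans castSucc_lt_succ)]
  · rw [swap_apply_left, cycleRange_of_gt castSucc_lt_succ, cycleRange_of_lt
      castSucc_lt_succ, coeSucc_eq_succ]
  · rcases (castSucc_lt_iff_succ_le.mp hj).eq_or_lt with rfl | hj'
    · rw [swap_apply_right, cycleRange_self, cycleRange_self]
    · rw [swap_apply_of_ne_of_ne hj.ne' hj'.ne', cycleRange_of_gt hj, cycleRange_of_gt hj']

-- The entry at position `k` moves to the front, past the smaller entries before it.
theorem reaches_mul_cycleRange_inv (k : Fin (m + 1)) :
    ∀ w : Perm (Fin (m + 1)), (∀ j < k, w j < w k) →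
      Reaches (m + 1) w (w * (cycleRange k)⁻¹) := by
  induction k using Fin.induction with
  | zero => intro w _; rw [cycleRange_zero, inv_one, mul_one]; exact ReflTransGen.refl
  | succ i ih =>
    intro w hw
    have hstep : w i.castSucc < w (i.castSucc + 1) := by
      rw [coeSucc_eq_succ]; exact hw _ castSucc_lt_succ
    refine ReflTransGen.trans (reaches_mul_swap hstep) ?_
    rw [coeSucc_eq_succ, cycleRange_succ_eq_mul_swap, mul_inv_rev, swap_inv, ← mul_assoc]
    refine ih _ fun j hj => ?_
    rw [Perm.mul_apply, swap_apply_of_ne_of_ne hj.ne (hj.trans castSucc_lt_succ).ne,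
      Perm.mul_apply, swap_apply_left]
    exact hw j (hj.trans castSucc_lt_succ)

theorem one_reaches_addRight_neg_one : Reaches (m + 1) 1 (Equiv.addRight (-1)) := by
  have h := reaches_mul_cycleRange_inv (last m) 1 fun j hj => hj
  have hrot : finRotate (m + 1) = Equiv.addRight 1 := Perm.ext finRotate_apply
  rwa [one_mul, cycleRange_last, hrot, neg_addRight] at h

theorem addRight_reaches_one (c : Fin (m + 1)) : Reaches (m + 1) (Equiv.addRight c) 1 := by
  induction c using Fin.induction with
  | zero => rw [addRight_zero]; exact ReflTransGen.refl
  | succ i ih =>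
    refine ReflTransGen.trans ?_ ih
    have h := one_reaches_addRight_neg_one.mul_addRight i.succ
    rwa [one_mul, ← addRight_add, ← coeSucc_eq_succ, add_neg_cancel_right, coeSucc_eq_succ] at h

theorem reaches_one_of_mul_addRight {w : Perm (Fin (m + 1))} (c : Fin (m + 1))
    (h : Reaches (m + 1) (w * Equiv.addRight c) 1) : Reaches (m + 1) w 1 := by
  have h' := h.mul_addRight (-c)
  rw [mul_assoc, ← addRight_add, neg_add_cancel, addRight_zero, mul_one, one_mul] at h'
  exact h'.trans (addRight_reaches_one _)

theorem reaches_one_of_eqOn_Iio (k : Fin (m + 1))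
    (hk : ∀ w : Perm (Fin (m + 1)), Set.EqOn w id (Set.Iic k) → Reaches (m + 1) w 1)
    (w : Perm (Fin (m + 1))) (hw : Set.EqOn w id (Set.Iio k)) : Reaches (m + 1) w 1 := by
  induction hp : (w.symm k : ℕ) using Nat.strong_induction_on generalizing w with
  | _ p ih =>
  have hle : k ≤ w.symm k := by
    by_contra! hlt
    have hfix : w (w.symm k) = w.symm k := hw hlt
    rw [apply_symm_apply] at hfix
    exact hlt.ne hfix.symm
  rcases hle.eq_or_lt with heq | hlt
  · refine hk w fun i hi => ?_
    rcases (Set.mem_Iic.mp hi).lt_or_eq with hi | rfl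
    · exact hw hi
    · exact (congrArg w heq).trans (w.apply_symm_apply _)
  · have hwk : k ≤ w k := by
      by_contra! hwk
      exact hwk.ne (w.injective (hw hwk))
    refine ReflTransGen.trans (reaches_mul_cycleRange_inv k w fun j hj => ?_)
      (reaches_one_of_mul_addRight 1 ?_)
    · exact (hw hj).trans_lt (hj.trans_le hwk)
    set v := w * (cycleRange k)⁻¹ * Equiv.addRight 1
    have hv : Set.EqOn v id (Set.Iio k) := fun i hi => by
      simp only [v, Perm.mul_apply, Equiv.coe_addRight]
      rw [Perm.inv_eq_iff_eq.mpr (cycleRange_of_lt hi).symm]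
      exact hw hi
    have hvp : v.symm k = w.symm k - 1 := by
      rw [symm_apply_eq]
      simp only [v, Perm.mul_apply, Equiv.coe_addRight, sub_add_cancel]
      rw [Perm.inv_eq_iff_eq.mpr (cycleRange_of_gt hlt).symm, apply_symm_apply]
    refine ih _ ?_ v hv rfl
    rw [← hp, hvp, val_sub_one_of_ne_zero (ne_bot_of_gt hlt)]
    have := Fin.lt_def.mp hlt
    omega

theorem reaches_one (w : Perm (Fin (m + 1))) : Reaches (m + 1) w 1 := by
  suffices h : ∀ k : Fin (m + 1), ∀ w : Perm (Fin (m + 1)), Set.EqOn w id (Set.Iic k) →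
      Reaches (m + 1) w 1 from
    reaches_one_of_eqOn_Iio 0 (h 0) w fun i hi => absurd hi (not_lt_zero i)
  intro k
  induction k using Fin.reverseInduction with
  | last =>
    intro w hw
    rw [show w = 1 from Perm.ext fun i => hw (le_last i)]
    exact ReflTransGen.refl
  | cast i ih =>
    exact fun w hw => reaches_one_of_eqOn_Iio i.succ ih w fun j hj =>
      hw (le_castSucc_iff.mpr hj)

theorem eq_revPerm_of_forall_succ_lt {w : Perm (Fin (m + 1))}
    (h : ∀ i : Fin m, w i.succ < w i.castSucc) : w = revPerm :=
  Perm.ext (congrFun ((StrictAnti.range_inj (strictAnti_iff_succ_lt.mpr h) rev_strictAnti).mp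
    (by rw [w.surjective.range_eq, rev_surjective.range_eq])))

theorem reaches_revPerm (w : Perm (Fin (m + 1))) : Reaches (m + 1) w revPerm := by
  induction h : weight w using Nat.strong_induction_on generalizing w with
  | _ k ih =>
  by_cases hw : ∀ i : Fin m, w i.succ < w i.castSucc
  · rw [eq_revPerm_of_forall_succ_lt hw]
    exact ReflTransGen.refl
  · obtain ⟨i, hi⟩ := not_forall.mp hw
    have hlt : w i.castSucc < w i.succ :=
      lt_of_le_of_ne (not_lt.mp hi) (w.injective.ne castSucc_lt_succ.ne)
    have hstep := reaches_mul_swap (i := i.castSucc) (by rwa [coeSucc_eq_succ])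
    rw [coeSucc_eq_succ] at hstep
    exact hstep.trans (ih _ (h ▸ weight_mul_swap_lt castSucc_lt_succ hlt) _ rfl)

theorem one_reaches (v : Perm (Fin (m + 1))) : Reaches (m + 1) 1 v := by
  have h := (reaches_revPerm (revPerm * v)).revPerm_mul
  rwa [← mul_assoc, show (revPerm : Perm (Fin (m + 1))) * revPerm = 1 from Perm.ext rev_rev,
    one_mul] at h

end

theorem bubble_transitive_general (n : ℕ) [NeZero n] (u v : Equiv.Perm (Fin n)) :
    ∃ g ∈ Submonoid.closure (Set.range (bubble n)), g u = v := by
  obtain ⟨m, rfl⟩ : ∃ m, n = m + 1 := ⟨n - 1, (Nat.succ_pred_eq_of_ne_zero (NeZero.ne n)).symm⟩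
  exact exists_mem_closure_of_reaches ((reaches_one u).trans (one_reaches v))

/-- the operators `f_0, f_1, …, f_{n−1}` act transitively on `S_n`:
for all `u v` there is an element `g` of the submonoid of self-maps of `S_n`
generated by them with `g u = v`. -/
theorem bubble_transitive (n : ℕ) [NeZero n] (hn : 2 ≤ n) (u v : Equiv.Perm (Fin n)) :
    ∃ g ∈ Submonoid.closure (Set.range (bubble n)), g u = v :=
  bubble_transitive_general n u v

end AffineSorting
end
end
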